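/- arXiv:2103.00283 — 12 statements merged into one kernel-verified Lean document; each statement's English description precedes it below -/
import Mathlib

section
/- The class of partially ordered sets has the strong amalgamation property: whenever A, B, C are partially ordered sets and i_A : C → A, i_B : C → B are order embeddings, there exist a partially ordered set D and order embeddings j_A : A → D, j_B : B → D such that j_A ∘ i_A = j_B ∘ i_B and the intersection of the ranges of j_A and j_B equals the range of j_A ∘ i_A. -/
/-- A bundled partially ordered set. -/
structure BundledPartialOrder where
  carrier : Type
  [ord : PartialOrder carrier]

attribute [instance] BundledPartialOrder.ord

section Amalg

variable {A B C : Type} [PartialOrder A] [PartialOrder B] [PartialOrder C]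

/-- The amalgamated order relation on `A ⊕ B`. -/
def amalgLE (iA : C ↪o A) (iB : C ↪o B) : A ⊕ B → A ⊕ B → Prop
  | .inl a, .inl a' => a ≤ a'
  | .inr b, .inr b' => b ≤ b'
  | .inl a, .inr b => ∃ c, a ≤ iA c ∧ iB c ≤ b
  | .inr b, .inl a => ∃ c, b ≤ iB c ∧ iA c ≤ a

/-- Type synonym to avoid clashing with the existing order on `Sum`. -/
def Amalg (A B : Type) : Type := A ⊕ B

def amalgPreorder (iA : C ↪o A) (iB : C ↪o B) : Preorder (Amalg A B) where
  le := amalgLE iA iB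
  lt := fun x y => amalgLE iA iB x y ∧ ¬ amalgLE iA iB y x
  lt_iff_le_not_ge := fun _ _ => Iff.rfl
  le_refl x := by cases x <;> exact le_refl _
  le_trans x y z hxy hyz := by
    cases x <;> cases y <;> cases z
    · exact le_trans hxy hyz
    · obtain ⟨c, h1, h2⟩ := hyz; exact ⟨c, le_trans hxy h1, h2⟩
    · obtain ⟨c, h1, h2⟩ := hxy; obtain ⟨c', h1', h2'⟩ := hyz
      exact le_trans h1 (le_trans (iA.monotone (iB.le_iff_le.mp (le_trans h2 h1'))) h2')
    · obtain ⟨c, h1, h2⟩ := hxy; exact ⟨c, h1, le_trans h2 hyz⟩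
    · obtain ⟨c, h1, h2⟩ := hxy; exact ⟨c, h1, le_trans h2 hyz⟩
    · obtain ⟨c, h1, h2⟩ := hxy; obtain ⟨c', h1', h2'⟩ := hyz
      exact le_trans h1 (le_trans (iB.monotone (iA.le_iff_le.mp (le_trans h2 h1'))) h2')
    · obtain ⟨c, h1, h2⟩ := hyz; exact ⟨c, le_trans hxy h1, h2⟩
    · exact le_trans hxy hyz

lemma toAnti_eq {α : Type} [Preorder α] {x y : α} (h1 : x ≤ y) (h2 : y ≤ x) :
    @toAntisymmetrization α (· ≤ ·) _ x = @toAntisymmetrization α (· ≤ ·) _ y :=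
  le_antisymm (toAntisymmetrization_mono h1) (toAntisymmetrization_mono h2)

lemma toAnti_eq_iff {α : Type} [Preorder α] {x y : α} :
    @toAntisymmetrization α (· ≤ ·) _ x = @toAntisymmetrization α (· ≤ ·) _ y ↔ x ≤ y ∧ y ≤ x :=
  ⟨fun h => ⟨toAntisymmetrization_le_toAntisymmetrization_iff.mp h.le,
    toAntisymmetrization_le_toAntisymmetrization_iff.mp h.ge⟩,
   fun h => toAnti_eq h.1 h.2⟩

end Amalg

/-- The class of partially ordered sets has the strong amalgamation property. -/
theorem posets_strong_amalgamation
    (A B C : BundledPartialOrder)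
    (iA : C.carrier ↪o A.carrier) (iB : C.carrier ↪o B.carrier) :
    ∃ (D : BundledPartialOrder) (jA : A.carrier ↪o D.carrier)
      (jB : B.carrier ↪o D.carrier),
      (∀ c, jA (iA c) = jB (iB c)) ∧
      Set.range jA ∩ Set.range jB = Set.range (fun c => jA (iA c)) := by
  letI P : Preorder (Amalg A.carrier B.carrier) := amalgPreorder iA iB
  let jA : A.carrier ↪o Antisymmetrization (Amalg A.carrier B.carrier) (· ≤ ·) :=
    OrderEmbedding.ofMapLEIff (fun a => toAntisymmetrization (· ≤ ·) (Sum.inl a))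
      (fun a a' => toAntisymmetrization_le_toAntisymmetrization_iff)
  let jB : B.carrier ↪o Antisymmetrization (Amalg A.carrier B.carrier) (· ≤ ·) :=
    OrderEmbedding.ofMapLEIff (fun b => toAntisymmetrization (· ≤ ·) (Sum.inr b))
      (fun b b' => toAntisymmetrization_le_toAntisymmetrization_iff)
  have hcomm : ∀ c, jA (iA c) = jB (iB c) := fun c =>
    toAnti_eq ⟨c, le_refl _, le_refl _⟩ ⟨c, le_refl _, le_refl _⟩
  refine ⟨⟨Antisymmetrization (Amalg A.carrier B.carrier) (· ≤ ·)⟩, jA, jB, hcomm, ?_⟩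
  ext x
  simp only [Set.mem_inter_iff, Set.mem_range]
  constructor
  · rintro ⟨⟨a, rfl⟩, ⟨b, hb⟩⟩
    obtain ⟨⟨c, hac, hcb⟩, ⟨c', hbc', hc'a⟩⟩ := toAnti_eq_iff.mp hb.symm
    have hcc' : c ≤ c' := iB.le_iff_le.mp (le_trans hcb hbc')
    have : a = iA c' := le_antisymm (le_trans hac (iA.monotone hcc')) hc'a
    exact ⟨c', by rw [this]⟩
  · rintro ⟨c, rfl⟩
    exact ⟨⟨iA c, rfl⟩, iB c, (hcomm c).symm⟩
end

section
/- For every four index sets F₁, F₂, F₃, F₄, the class of partially ordered sets equipped with unary operations indexed by F₁ ∪ F₂ ∪ F₃ ∪ F₄, where each operation indexed by F₁ is order preserving, each operation indexed by F₂ is order reversing, each operation indexed by F₃ is strict order preserving, and each operation indexed by F₄ is strict order reversing, has the strong amalgamation property: given such structures A, B, C and embeddings i_A : C → A, i_B : C → B (order embeddings commuting with each indexed operation), there exist such a structure D and embeddings j_A : A → D, j_B : B → D commuting with all the indexed operations, with j_A ∘ i_A = j_B ∘ i_B and range(j_A) ∩ range(j_B) = range(j_A ∘ i_A). -/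
/-!
Glue `A` and `B` along `C`: on `A ⊕ B` let `a ≤ b` (resp. `b ≤ a`) hold across the summands
when some `c ∈ C` lies between them, i.e. `a ≤ iA c` and `iB c ≤ b` (resp. `b ≤ iB c` and
`iA c ≤ a`), and identify equivalent elements. Every operation acts summandwise; it is monotone
because it moves the witness `c` along with `a` and `b`. It stays strict: if `a < b` via `c` but
`f b ≤ f a` via `c'`, then `f c = c'` in `C`, which squeezes `f a ≤ f (iA c) ≤ f a` and
`f (iB c) ≤ f b ≤ f (iB c)`; strictness then forces `iA c ≤ a` and `b ≤ iB c`, i.e. `b ≤ a`.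
The order reversing cases are the order preserving ones for the dual orders. Amalgamation is
strong because `a ∈ A` is identified with `b ∈ B` only when `a ≤ iA c ≤ a` and
`iB c ≤ b ≤ iB c` for some `c`.
-/

/-- A partially ordered set equipped with four indexed families of unary operations:
order preserving ones (indexed by `F1`), order reversing ones (indexed by `F2`),
strict order preserving ones (indexed by `F3`) and strict order reversing ones
(indexed by `F4`). -/
structure PosetWithOps (F1 F2 F3 F4 : Type) where
  carrier : Type
  [ord : PartialOrder carrier]
  f1 : F1 → carrier → carrier
  f2 : F2 → carrier → carrier
  f3 : F3 → carrier → carrier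
  f4 : F4 → carrier → carrier
  mono_f1 : ∀ i, Monotone (f1 i)
  anti_f2 : ∀ i, Antitone (f2 i)
  smono_f3 : ∀ i, StrictMono (f3 i)
  santi_f4 : ∀ i, StrictAnti (f4 i)

attribute [instance] PosetWithOps.ord

open OrderDual

namespace Antisymmetrization

variable {α β : Type*} [Preorder α] [Preorder β]

def map (f : α → β)
    (hf : ∀ a b, AntisymmRel (· ≤ ·) a b → AntisymmRel (· ≤ ·) (f a) (f b)) :
    Antisymmetrization α (· ≤ ·) → Antisymmetrization β (· ≤ ·) :=
  Quotient.map' f hf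

variable {f : α → β}
  {hf : ∀ a b, AntisymmRel (· ≤ ·) a b → AntisymmRel (· ≤ ·) (f a) (f b)}

theorem monotone_map (hf' : Monotone f) : Monotone (map f hf) :=
  fun x y => Quotient.inductionOn₂' x y fun _ _ h => hf' h

theorem antitone_map (hf' : Antitone f) : Antitone (map f hf) :=
  fun x y => Quotient.inductionOn₂' x y fun _ _ h => hf' h

theorem strictMono_map (hf' : StrictMono f) : StrictMono (map f hf) :=
  fun x y => Quotient.inductionOn₂' x y fun _ _ h => hf' h

theorem strictAnti_map (hf' : StrictAnti f) : StrictAnti (map f hf) :=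
  fun x y => Quotient.inductionOn₂' x y fun _ _ h => hf' h

end Antisymmetrization

theorem StrictMono.le_of_le_of_apply_le {α β : Type*} [Preorder α] [Preorder β] {f : α → β}
    (hf : StrictMono f) {a b : α} (hab : a ≤ b) (h : f b ≤ f a) : b ≤ a := by
  by_contra hba
  exact (hf (hab.lt_of_not_ge hba)).not_ge h

section Amalgam

variable {α β γ α' β' γ' : Type*} [PartialOrder α] [PartialOrder β] [PartialOrder γ]
  [PartialOrder α'] [PartialOrder β'] [PartialOrder γ']

/-- The least preorder on `α ⊕ β` extending those of `α` and `β` in which `iA c` and `iB c` are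
equivalent. -/
def PreAmalgam (_iA : γ ↪o α) (_iB : γ ↪o β) : Type _ := α ⊕ β

namespace PreAmalgam

variable {iA : γ ↪o α} {iB : γ ↪o β}

protected def LE : PreAmalgam iA iB → PreAmalgam iA iB → Prop
  | .inl a, .inl a' => a ≤ a'
  | .inl a, .inr b => ∃ c, a ≤ iA c ∧ iB c ≤ b
  | .inr b, .inl a => ∃ c, b ≤ iB c ∧ iA c ≤ a
  | .inr b, .inr b' => b ≤ b'

instance : Preorder (PreAmalgam iA iB) where
  le := PreAmalgam.LE
  le_refl
    | .inl a => le_refl a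
    | .inr b => le_refl b
  le_trans := by
    rintro (a | b) (a' | b') (a'' | b'') h h'
    · exact le_trans (α := α) h h'
    · obtain ⟨c, h₁, h₂⟩ := h'
      exact ⟨c, le_trans h h₁, h₂⟩
    · obtain ⟨c, h₁, h₂⟩ := h
      obtain ⟨c', h₃, h₄⟩ := h'
      exact (h₁.trans (iA.monotone (iB.le_iff_le.mp (h₂.trans h₃)))).trans h₄
    · obtain ⟨c, h₁, h₂⟩ := h
      exact ⟨c, h₁, le_trans h₂ h'⟩
    · obtain ⟨c, h₁, h₂⟩ := h
      exact ⟨c, h₁, le_trans h₂ h'⟩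
    · obtain ⟨c, h₁, h₂⟩ := h
      obtain ⟨c', h₃, h₄⟩ := h'
      exact (h₁.trans (iB.monotone (iA.le_iff_le.mp (h₂.trans h₃)))).trans h₄
    · obtain ⟨c, h₁, h₂⟩ := h'
      exact ⟨c, le_trans h h₁, h₂⟩
    · exact le_trans (α := β) h h'

def inl (a : α) : PreAmalgam iA iB := Sum.inl a

def inr (b : β) : PreAmalgam iA iB := Sum.inr b

variable {iA' : γ' ↪o α'} {iB' : γ' ↪o β'}

def map (gA : α → α') (gB : β → β') : PreAmalgam iA iB → PreAmalgam iA' iB' := Sum.map gA gB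

variable {gA : α → α'} {gB : β → β'} {gC : γ → γ'}

theorem monotone_map (hA : ∀ c, iA' (gC c) = gA (iA c)) (hB : ∀ c, iB' (gC c) = gB (iB c))
    (hgA : Monotone gA) (hgB : Monotone gB) :
    Monotone (map gA gB : PreAmalgam iA iB → PreAmalgam iA' iB') := by
  rintro (a | b) (a' | b') h
  · exact hgA (h : a ≤ a')
  · obtain ⟨c, h₁, h₂⟩ := h
    exact ⟨gC c, (hgA h₁).trans (hA c).ge, (hB c).le.trans (hgB h₂)⟩
  · obtain ⟨c, h₁, h₂⟩ := h
    exact ⟨gC c, (hgB h₁).trans (hB c).ge, (hA c).le.trans (hgA h₂)⟩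
  · exact hgB (h : b ≤ b')

theorem inr_le_inl_of_map_le (hA : ∀ c, iA' (gC c) = gA (iA c))
    (hB : ∀ c, iB' (gC c) = gB (iB c)) (hgA : StrictMono gA) (hgB : StrictMono gB)
    {a : α} {b : β}
    (h : (inl a : PreAmalgam iA iB) ≤ inr b)
    (h' : (inr (gB b) : PreAmalgam iA' iB') ≤ inl (gA a)) :
    (inr b : PreAmalgam iA iB) ≤ inl a := by
  obtain ⟨c, h₁, h₂⟩ := h
  obtain ⟨c', h₃, h₄⟩ := h'
  refine ⟨c, hgB.le_of_le_of_apply_le h₂ ?_, hgA.le_of_le_of_apply_le h₁ ?_⟩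
  · calc gB b ≤ iB' c' := h₃
      _ ≤ iB' (gC c) :=
        iB'.monotone (iA'.le_iff_le.mp (h₄.trans ((hgA.monotone h₁).trans (hA c).ge)))
      _ = gB (iB c) := hB c
  · calc gA (iA c) = iA' (gC c) := (hA c).symm
      _ ≤ iA' c' :=
        iA'.monotone (iB'.le_iff_le.mp (((hB c).le.trans (hgB.monotone h₂)).trans h₃))
      _ ≤ gA a := h₄

theorem strictMono_map (hA : ∀ c, iA' (gC c) = gA (iA c)) (hB : ∀ c, iB' (gC c) = gB (iB c))
    (hgA : StrictMono gA) (hgB : StrictMono gB) :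
    StrictMono (map gA gB : PreAmalgam iA iB → PreAmalgam iA' iB') := by
  refine fun x y hxy => (monotone_map hA hB hgA.monotone hgB.monotone hxy.le).lt_of_not_ge
    fun hyx => hxy.not_ge ?_
  rcases x with a | b <;> rcases y with a' | b'
  · exact hgA.le_of_le_of_apply_le (hxy.le : a ≤ a') hyx
  · exact inr_le_inl_of_map_le hA hB hgA hgB hxy.le hyx
  -- the same lemma for `PreAmalgam iB iA`, whose cross relations are those of `PreAmalgam iA iB`
  · exact inr_le_inl_of_map_le (iA := iB) (iB := iA) hB hA hgB hgA hxy.le hyx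
  · exact hgB.le_of_le_of_apply_le (hxy.le : b ≤ b') hyx

def dualIso : (PreAmalgam iA iB)ᵒᵈ ≃o PreAmalgam iA.dual iB.dual where
  toEquiv := ofDual.trans (Equiv.sumCongr toDual toDual)
  map_rel_iff' := by
    rintro (a | b) (a' | b')
    · exact Iff.rfl
    · exact exists_congr fun _ => and_comm
    · exact exists_congr fun _ => and_comm
    · exact Iff.rfl

theorem dualIso_toDual_map (x : PreAmalgam iA iB) :
    dualIso (toDual (map gA gB x : PreAmalgam iA' iB')) =
      map (toDual ∘ gA) (toDual ∘ gB) x := by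
  cases x <;> rfl

theorem antitone_map (hA : ∀ c, iA' (gC c) = gA (iA c)) (hB : ∀ c, iB' (gC c) = gB (iB c))
    (hgA : Antitone gA) (hgB : Antitone gB) :
    Antitone (map gA gB : PreAmalgam iA iB → PreAmalgam iA' iB') := fun x y h => by
  rw [← toDual_le_toDual, ← dualIso.le_iff_le, dualIso_toDual_map, dualIso_toDual_map]
  exact monotone_map (iA' := iA'.dual) (iB' := iB'.dual) (gC := toDual ∘ gC) hA hB
    hgA.dual_right hgB.dual_right h

theorem strictAnti_map (hA : ∀ c, iA' (gC c) = gA (iA c)) (hB : ∀ c, iB' (gC c) = gB (iB c))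
    (hgA : StrictAnti gA) (hgB : StrictAnti gB) :
    StrictAnti (map gA gB : PreAmalgam iA iB → PreAmalgam iA' iB') := fun x y h => by
  rw [← toDual_lt_toDual, ← dualIso.lt_iff_lt, dualIso_toDual_map, dualIso_toDual_map]
  exact strictMono_map (iA' := iA'.dual) (iB' := iB'.dual) (gC := toDual ∘ gC) hA hB
    hgA.dual_right hgB.dual_right h

end PreAmalgam

abbrev Amalgam (iA : γ ↪o α) (iB : γ ↪o β) : Type _ :=
  Antisymmetrization (PreAmalgam iA iB) (· ≤ ·)

namespace Amalgam

variable {iA : γ ↪o α} {iB : γ ↪o β}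

def inl : α ↪o Amalgam iA iB :=
  .ofMapLEIff (fun a => toAntisymmetrization _ (PreAmalgam.inl a)) fun _ _ => Iff.rfl

def inr : β ↪o Amalgam iA iB :=
  .ofMapLEIff (fun b => toAntisymmetrization _ (PreAmalgam.inr b)) fun _ _ => Iff.rfl

theorem inl_apply_eq_inr_apply (c : γ) : (inl (iA c) : Amalgam iA iB) = inr (iB c) :=
  Quotient.sound ⟨⟨c, le_rfl, le_rfl⟩, ⟨c, le_rfl, le_rfl⟩⟩

theorem range_inl_inter_range_inr :
    Set.range (inl : α ↪o Amalgam iA iB) ∩ Set.range inr = Set.range fun c => inl (iA c) := by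
  ext x
  constructor
  · rintro ⟨⟨a, rfl⟩, b, hb⟩
    obtain ⟨⟨c, hbc, hca⟩, ⟨c', hac', hc'b⟩⟩ := Quotient.exact hb
    have hc' : c' ≤ c := iB.le_iff_le.mp (hc'b.trans hbc)
    exact ⟨c, congrArg inl (le_antisymm hca (hac'.trans (iA.monotone hc')))⟩
  · rintro ⟨c, rfl⟩
    exact ⟨⟨iA c, rfl⟩, iB c, (inl_apply_eq_inr_apply c).symm⟩

end Amalgam

end Amalgam

namespace PosetWithOps

variable {F1 F2 F3 F4 : Type} {A B C : PosetWithOps F1 F2 F3 F4}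

structure IsEmbedding (e : C.carrier ↪o A.carrier) : Prop where
  map_f1 : ∀ i c, e (C.f1 i c) = A.f1 i (e c)
  map_f2 : ∀ i c, e (C.f2 i c) = A.f2 i (e c)
  map_f3 : ∀ i c, e (C.f3 i c) = A.f3 i (e c)
  map_f4 : ∀ i c, e (C.f4 i c) = A.f4 i (e c)

variable {iA : C.carrier ↪o A.carrier} {iB : C.carrier ↪o B.carrier}

def amalgam (hA : IsEmbedding iA) (hB : IsEmbedding iB) : PosetWithOps F1 F2 F3 F4 :=
  have mono1 i := PreAmalgam.monotone_map (hA.map_f1 i) (hB.map_f1 i) (A.mono_f1 i) (B.mono_f1 i)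
  have anti2 i := PreAmalgam.antitone_map (hA.map_f2 i) (hB.map_f2 i) (A.anti_f2 i) (B.anti_f2 i)
  have mono3 i := PreAmalgam.monotone_map (hA.map_f3 i) (hB.map_f3 i) (A.smono_f3 i).monotone
    (B.smono_f3 i).monotone
  have anti4 i := PreAmalgam.antitone_map (hA.map_f4 i) (hB.map_f4 i) (A.santi_f4 i).antitone
    (B.santi_f4 i).antitone
  { carrier := Amalgam iA iB
    f1 i := .map (PreAmalgam.map (A.f1 i) (B.f1 i)) fun _ _ h => h.image (mono1 i)
    f2 i := .map (PreAmalgam.map (A.f2 i) (B.f2 i)) fun _ _ h => ⟨anti2 i h.2, anti2 i h.1⟩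
    f3 i := .map (PreAmalgam.map (A.f3 i) (B.f3 i)) fun _ _ h => h.image (mono3 i)
    f4 i := .map (PreAmalgam.map (A.f4 i) (B.f4 i)) fun _ _ h => ⟨anti4 i h.2, anti4 i h.1⟩
    mono_f1 i := Antisymmetrization.monotone_map (mono1 i)
    anti_f2 i := Antisymmetrization.antitone_map (anti2 i)
    smono_f3 i := Antisymmetrization.strictMono_map <|
      PreAmalgam.strictMono_map (hA.map_f3 i) (hB.map_f3 i) (A.smono_f3 i) (B.smono_f3 i)
    santi_f4 i := Antisymmetrization.strictAnti_map <|
      PreAmalgam.strictAnti_map (hA.map_f4 i) (hB.map_f4 i) (A.santi_f4 i) (B.santi_f4 i) }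

end PosetWithOps

open PosetWithOps

/-- The class of posets with any number of order preserving, order reversing,
strict order preserving and strict order reversing unary operations has the
strong amalgamation property. -/
theorem posets_with_ops_strong_amalgamation (F1 F2 F3 F4 : Type)
    (A B C : PosetWithOps F1 F2 F3 F4)
    (iA : C.carrier ↪o A.carrier) (iB : C.carrier ↪o B.carrier)
    (hA1 : ∀ i c, iA (C.f1 i c) = A.f1 i (iA c))
    (hA2 : ∀ i c, iA (C.f2 i c) = A.f2 i (iA c))
    (hA3 : ∀ i c, iA (C.f3 i c) = A.f3 i (iA c))
    (hA4 : ∀ i c, iA (C.f4 i c) = A.f4 i (iA c))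
    (hB1 : ∀ i c, iB (C.f1 i c) = B.f1 i (iB c))
    (hB2 : ∀ i c, iB (C.f2 i c) = B.f2 i (iB c))
    (hB3 : ∀ i c, iB (C.f3 i c) = B.f3 i (iB c))
    (hB4 : ∀ i c, iB (C.f4 i c) = B.f4 i (iB c)) :
    ∃ (D : PosetWithOps F1 F2 F3 F4) (jA : A.carrier ↪o D.carrier)
      (jB : B.carrier ↪o D.carrier),
      (∀ i a, jA (A.f1 i a) = D.f1 i (jA a)) ∧
      (∀ i a, jA (A.f2 i a) = D.f2 i (jA a)) ∧
      (∀ i a, jA (A.f3 i a) = D.f3 i (jA a)) ∧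
      (∀ i a, jA (A.f4 i a) = D.f4 i (jA a)) ∧
      (∀ i b, jB (B.f1 i b) = D.f1 i (jB b)) ∧
      (∀ i b, jB (B.f2 i b) = D.f2 i (jB b)) ∧
      (∀ i b, jB (B.f3 i b) = D.f3 i (jB b)) ∧
      (∀ i b, jB (B.f4 i b) = D.f4 i (jB b)) ∧
      (∀ c, jA (iA c) = jB (iB c)) ∧
      Set.range jA ∩ Set.range jB = Set.range (fun c => jA (iA c)) := by
  have hA : IsEmbedding iA := ⟨hA1, hA2, hA3, hA4⟩
  have hB : IsEmbedding iB := ⟨hB1, hB2, hB3, hB4⟩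
  refine ⟨amalgam hA hB, Amalgam.inl, Amalgam.inr, ?_, ?_, ?_, ?_, ?_, ?_, ?_, ?_,
    Amalgam.inl_apply_eq_inr_apply, Amalgam.range_inl_inter_range_inr⟩ <;>
  exact fun _ _ => rfl
end

section
/- The class of linearly ordered sets equipped with one order preserving (monotone) unary operation has the strong amalgamation property: whenever A, B, C are linearly ordered sets with monotone unary operations f_A, f_B, f_C and i_A : C → A, i_B : C → B are order embeddings satisfying i_A ∘ f_C = f_A ∘ i_A and i_B ∘ f_C = f_B ∘ i_B, there exist a linearly ordered set D with a monotone unary operation f_D and order embeddings j_A : A → D, j_B : B → D commuting with the operations, such that j_A ∘ i_A = j_B ∘ i_B and range(j_A) ∩ range(j_B) = range(j_A ∘ i_A). -/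
/-!
Every element `x` of `A` or `B` determines a cut of `C` (the image of a point of `C`, or a gap
between such images), and so does each iterate `fⁿ x`. Order `A ⊔ B` by comparing these
itineraries of cuts lexicographically and breaking ties by the order of `A ⊕ₗ B`, except that
elements sitting on the same point of `C` are identified. The operation is monotone for this
order: if the itineraries of `x < y` already differ at step `0`, some `c` separates `x` from `y`,
so `f c` separates `f x` from `f y`; and if `f x`, `f y` then sit on the same point of `C`, they
are glued from there on. Only images of `C` get identified, which is strong amalgamation.
-/

/-- A linearly ordered set equipped with one order preserving (monotone) unary
operation. -/
structure LinOrderMono where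
  carrier : Type
  [linOrd : LinearOrder carrier]
  f : carrier → carrier
  mono : Monotone f

attribute [instance] LinOrderMono.linOrd

open Function

section Cut

variable {α β γ : Type*} [LinearOrder α] [LinearOrder β] [LinearOrder γ]

/-- A point of `γ` and the gap just below it share the strict lower set; the weak lower set
tells them apart. -/
def cutPos (i : γ ↪o α) (a : α) : LowerSet γ ×ₗ LowerSet γ :=
  toLex (⟨{c | i c < a}, fun _ _ h hc => (i.monotone h).trans_lt hc⟩,
    ⟨{c | i c ≤ a}, fun _ _ h hc => (i.monotone h).trans hc⟩)

def pointCut (c : γ) : LowerSet γ ×ₗ LowerSet γ := toLex (LowerSet.Iio c, LowerSet.Iic c)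

theorem cutPos_mono (i : γ ↪o α) : Monotone (cutPos i) := fun _ _ h =>
  Prod.Lex.toLex_mono ⟨fun _ hc => lt_of_lt_of_le hc h, fun _ hc => le_trans hc h⟩

theorem cutPos_apply (i : γ ↪o α) (c : γ) : cutPos i (i c) = pointCut c := by
  simp only [cutPos, pointCut, OrderEmbedding.lt_iff_lt, OrderEmbedding.le_iff_le]
  rfl

theorem cutPos_eq_pointCut_iff {i : γ ↪o α} {a : α} {c : γ} :
    cutPos i a = pointCut c ↔ a = i c := by
  refine ⟨fun h => ?_, fun h => h ▸ cutPos_apply i c⟩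
  simp only [cutPos, pointCut, toLex_inj, Prod.mk.injEq, SetLike.ext_iff] at h
  have hle : i c ≤ a := (h.2 c).2 (LowerSet.mem_Iic_iff.2 le_rfl)
  have hnlt : ¬ i c < a := fun hlt => lt_irrefl c (LowerSet.mem_Iio_iff.1 ((h.1 c).1 hlt))
  exact (not_lt.1 hnlt).antisymm hle

theorem eq_of_cutPos_eq_pointCut {i : γ ↪o α} {a a' : α} {c : γ} (ha : cutPos i a = pointCut c)
    (ha' : cutPos i a' = pointCut c) : a = a' :=
  (cutPos_eq_pointCut_iff.1 ha).trans (cutPos_eq_pointCut_iff.1 ha').symm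

theorem exists_le_le_of_cutPos_lt (i : γ ↪o α) (j : γ ↪o β) {a : α} {b : β}
    (h : cutPos i a < cutPos j b) : ∃ c, a ≤ i c ∧ j c ≤ b := by
  rcases Prod.Lex.toLex_lt_toLex.1 h with hlt | ⟨-, hlt⟩
  · obtain ⟨c, hcb, hca⟩ := Set.exists_of_ssubset (LowerSet.coe_ssubset_coe.2 hlt)
    exact ⟨c, not_lt.1 hca, le_of_lt hcb⟩
  · obtain ⟨c, hcb, hca⟩ := Set.exists_of_ssubset (LowerSet.coe_ssubset_coe.2 hlt)
    exact ⟨c, le_of_lt (not_le.1 hca), hcb⟩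

end Cut

theorem Pi.head_lt_or_tail_lt_of_toLex_lt {β : Type*} [LT β] {s t : ℕ → β}
    (h : toLex s < toLex t) : s 0 < t 0 ∨ toLex (s ∘ Nat.succ) < toLex (t ∘ Nat.succ) := by
  obtain ⟨n, heq, hlt⟩ := h
  cases n with
  | zero => exact Or.inl hlt
  | succ k => exact Or.inr ⟨k, fun j hj => heq (j + 1) (Nat.succ_lt_succ hj), hlt⟩

section Itinerary

variable {X P γ : Type*} (F : X → X) (pos : X → P)

def itinerary (x : X) : Lex (ℕ → P) := toLex fun n => pos (F^[n] x)

theorem itinerary_map (x : X) :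
    itinerary F pos (F x) = toLex (ofLex (itinerary F pos x) ∘ Nat.succ) :=
  rfl

open Classical in
noncomputable def tieBreak (pt : γ → P) (x : X) : WithBot X :=
  if ∃ c, pos x = pt c then ⊥ else x

/-- Elements of `X` sitting on a point `pt c` get the same key as soon as their itineraries
agree; all other ties of itineraries are broken by the order of `X`. -/
noncomputable def amalgKey (pt : γ → P) (x : X) : Lex (ℕ → P) ×ₗ WithBot X :=
  toLex (itinerary F pos x, tieBreak pos pt x)

variable {F pos} {pt : γ → P} {g : γ → γ}

theorem tieBreak_of_pos_eq {x : X} {c : γ} (hx : pos x = pt c) : tieBreak pos pt x = ⊥ :=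
  if_pos ⟨c, hx⟩

theorem tieBreak_of_forall_ne {x : X} (hx : ∀ c, pos x ≠ pt c) : tieBreak pos pt x = x :=
  if_neg fun ⟨c, hc⟩ => hx c hc

theorem itinerary_eq_of_pos_eq (hpt : ∀ x c, pos x = pt c → pos (F x) = pt (g c))
    {x : X} {c : γ} (hx : pos x = pt c) : itinerary F pos x = toLex fun n => pt (g^[n] c) := by
  suffices ∀ n x c, pos x = pt c → pos (F^[n] x) = pt (g^[n] c) from
    funext fun n => this n x c hx
  intro n
  induction n with
  | zero => exact fun _ _ h => h
  | succ n ih => exact fun x c h => ih (F x) (g c) (hpt x c h)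

theorem amalgKey_eq_of_pos_eq (hpt : ∀ x c, pos x = pt c → pos (F x) = pt (g c))
    {x y : X} {c : γ} (hx : pos x = pt c) (hy : pos y = pt c) :
    amalgKey F pos pt x = amalgKey F pos pt y := by
  rw [amalgKey, amalgKey, itinerary_eq_of_pos_eq hpt hx, itinerary_eq_of_pos_eq hpt hy,
    tieBreak_of_pos_eq hx, tieBreak_of_pos_eq hy]

theorem exists_pos_eq_of_amalgKey_eq {x y : X} (h : amalgKey F pos pt x = amalgKey F pos pt y)
    (hne : x ≠ y) : ∃ c, pos x = pt c := by
  by_contra! hx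
  have htie : tieBreak pos pt x = tieBreak pos pt y := congrArg (fun k => (ofLex k).2) h
  by_cases hy : ∃ c, pos y = pt c
  · obtain ⟨c, hc⟩ := hy
    simp [tieBreak_of_forall_ne hx, tieBreak_of_pos_eq hc] at htie
  · push Not at hy
    rw [tieBreak_of_forall_ne hx, tieBreak_of_forall_ne hy] at htie
    exact hne (WithBot.coe_injective htie)

variable [LinearOrder P]

theorem itinerary_map_lt_or_of_lt
    (hsep : ∀ x y, pos x < pos y → ∃ c, pos (F x) ≤ pt c ∧ pt c ≤ pos (F y))
    {x y : X} (h : itinerary F pos x < itinerary F pos y) :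
    itinerary F pos (F x) < itinerary F pos (F y) ∨
      ∃ c, pos (F x) = pt c ∧ pos (F y) = pt c := by
  rcases Pi.head_lt_or_tail_lt_of_toLex_lt h with hhead | htail
  · obtain ⟨c, hxc, hcy⟩ := hsep x y hhead
    rcases hxc.lt_or_eq with hlt | hxc
    · exact Or.inl ⟨0, nofun, hlt.trans_le hcy⟩
    rcases hcy.lt_or_eq with hlt | hcy
    · exact Or.inl ⟨0, nofun, hxc.trans_lt hlt⟩
    · exact Or.inr ⟨c, hxc, hcy.symm⟩
  · rw [itinerary_map, itinerary_map]
    exact Or.inl htail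

variable [LinearOrder X]

theorem amalgKey_lt_of_lt {x y : X} (hxy : x < y) (hitin : itinerary F pos x ≤ itinerary F pos y)
    (hpt : ∀ c, pos x = pt c → pos y ≠ pt c) : amalgKey F pos pt x < amalgKey F pos pt y := by
  rcases hitin.lt_or_eq with hlt | heq
  · exact Prod.Lex.toLex_lt_toLex.2 (Or.inl hlt)
  have hpos : pos x = pos y := congrFun (congrArg ofLex heq) 0
  have hx : ∀ c, pos x ≠ pt c := fun c hc => hpt c hc (hpos ▸ hc)
  refine Prod.Lex.toLex_lt_toLex.2 (Or.inr ⟨heq, ?_⟩)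
  rw [tieBreak_of_forall_ne hx, tieBreak_of_forall_ne (hpos ▸ hx)]
  exact WithBot.coe_lt_coe.2 hxy

theorem amalgKey_map_le (hF : Monotone F) (hpt : ∀ x c, pos x = pt c → pos (F x) = pt (g c))
    (hsep : ∀ x y, pos x < pos y → ∃ c, pos (F x) ≤ pt c ∧ pt c ≤ pos (F y)) (x y : X)
    (h : amalgKey F pos pt x ≤ amalgKey F pos pt y) :
    amalgKey F pos pt (F x) ≤ amalgKey F pos pt (F y) := by
  rcases Prod.Lex.toLex_le_toLex.1 h with hlt | ⟨heq, htie⟩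
  · rcases itinerary_map_lt_or_of_lt hsep hlt with hlt' | ⟨c, hx, hy⟩
    · exact Prod.Lex.toLex_le_toLex.2 (Or.inl hlt')
    · exact (amalgKey_eq_of_pos_eq hpt hx hy).le
  have hpos : pos x = pos y := congrFun (congrArg ofLex heq) 0
  have hitin : itinerary F pos (F x) = itinerary F pos (F y) := by
    rw [itinerary_map, itinerary_map, show itinerary F pos x = itinerary F pos y from heq]
  have hFpos : pos (F x) = pos (F y) := congrFun (congrArg ofLex hitin) 0
  by_cases hFy : ∃ c, pos (F y) = pt c
  · obtain ⟨c, hc⟩ := hFy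
    exact (amalgKey_eq_of_pos_eq hpt (hFpos.trans hc) hc).le
  push Not at hFy
  have hx : ∀ c, pos x ≠ pt c := fun c hc => hFy (g c) (hFpos ▸ hpt x c hc)
  refine Prod.Lex.toLex_le_toLex.2 (Or.inr ⟨hitin, ?_⟩)
  rw [tieBreak_of_forall_ne hx, tieBreak_of_forall_ne (hpos ▸ hx)] at htie
  rw [tieBreak_of_forall_ne (hFpos ▸ hFy), tieBreak_of_forall_ne hFy]
  exact WithBot.coe_le_coe.2 (hF (WithBot.coe_le_coe.1 htie))

theorem amalgKey_comp_strictMono {α : Type*} [LinearOrder α] {e : α → X} {fα : α → α}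
    (he : StrictMono e) (hsemi : Semiconj e fα F) (hf : Monotone fα) (hpos : Monotone (pos ∘ e))
    (hinj : ∀ {a a' c}, pos (e a) = pt c → pos (e a') = pt c → a = a') :
    StrictMono (amalgKey F pos pt ∘ e) := by
  intro a a' h
  refine amalgKey_lt_of_lt (he h) (Pi.toLex_monotone fun n => ?_) fun c hc hc' =>
    h.ne (hinj hc hc')
  change pos (F^[n] (e a)) ≤ pos (F^[n] (e a'))
  rw [← hsemi.iterate_right n a, ← hsemi.iterate_right n a']
  exact hpos (hf.iterate n h.le)

end Itinerary

namespace LinOrderMono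

variable {X K : Type} [LinearOrder K] (key : X → K) (F : X → X)
  (hF : ∀ x y, key x ≤ key y → key (F x) ≤ key (F y))

noncomputable def ofKey : LinOrderMono where
  carrier := Set.range key
  f k := ⟨key (F k.2.choose), Set.mem_range_self _⟩
  mono k l hkl := hF _ _ (by rw [k.2.choose_spec, l.2.choose_spec]; exact hkl)

theorem ofKey_f_mk (x : X) :
    (ofKey key F hF).f ⟨key x, Set.mem_range_self x⟩ = ⟨key (F x), Set.mem_range_self _⟩ := by
  have hx : key (Set.mem_range_self (f := key) x).choose = key x :=
    (Set.mem_range_self x).choose_spec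
  exact Subtype.ext (le_antisymm (hF _ _ hx.le) (hF _ _ hx.ge))

noncomputable def ofKeyEmbedding {α : Type} [LinearOrder α] (e : α → X)
    (he : StrictMono (key ∘ e)) : α ↪o (ofKey key F hF).carrier :=
  OrderEmbedding.ofStrictMono (fun a => ⟨key (e a), Set.mem_range_self _⟩) he

theorem ofKeyEmbedding_map {α : Type} [LinearOrder α] {e : α → X} {fα : α → α}
    (he : StrictMono (key ∘ e)) (hsemi : Semiconj e fα F) (a : α) :
    ofKeyEmbedding key F hF e he (fα a) = (ofKey key F hF).f (ofKeyEmbedding key F hF e he a) :=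
  Subtype.ext <| (congrArg key (hsemi a)).trans
    (congrArg Subtype.val (ofKey_f_mk key F hF (e a))).symm

def sumLexMap (A B : LinOrderMono) (x : A.carrier ⊕ₗ B.carrier) : A.carrier ⊕ₗ B.carrier :=
  toLex (Sum.map A.f B.f (ofLex x))

theorem sumLexMap_monotone {A B : LinOrderMono} : Monotone (sumLexMap A B) := by
  rintro (a | b) (a' | b') h
  · exact Sum.Lex.inl_le_inl_iff.2 (A.mono (Sum.Lex.inl_le_inl_iff.1 h))
  · exact Sum.Lex.inl_le_inr _ _
  · exact absurd h Sum.Lex.not_inr_le_inl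
  · exact Sum.Lex.inr_le_inr_iff.2 (B.mono (Sum.Lex.inr_le_inr_iff.1 h))

end LinOrderMono

open LinOrderMono

section Amalgam

variable {A B C : LinOrderMono}

theorem cutPos_map_eq_pointCut {i : C.carrier ↪o A.carrier} (hi : ∀ c, i (C.f c) = A.f (i c))
    {a : A.carrier} {c : C.carrier} (h : cutPos i a = pointCut c) :
    cutPos i (A.f a) = pointCut (C.f c) := by
  rw [cutPos_eq_pointCut_iff.1 h, ← hi, cutPos_apply]

theorem exists_pointCut_between_cutPos_map {i : C.carrier ↪o A.carrier}
    {j : C.carrier ↪o B.carrier} (hi : ∀ c, i (C.f c) = A.f (i c))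
    (hj : ∀ c, j (C.f c) = B.f (j c)) {a : A.carrier} {b : B.carrier}
    (h : cutPos i a < cutPos j b) :
    ∃ c, cutPos i (A.f a) ≤ pointCut c ∧ pointCut c ≤ cutPos j (B.f b) := by
  obtain ⟨c, hac, hcb⟩ := exists_le_le_of_cutPos_lt i j h
  refine ⟨C.f c, ?_, ?_⟩
  · rw [← cutPos_apply i, hi]
    exact cutPos_mono i (A.mono hac)
  · rw [← cutPos_apply j, hj]
    exact cutPos_mono j (B.mono hcb)

variable (iA : C.carrier ↪o A.carrier) (iB : C.carrier ↪o B.carrier)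

def sumCut (x : A.carrier ⊕ₗ B.carrier) : LowerSet C.carrier ×ₗ LowerSet C.carrier :=
  Sum.elim (cutPos iA) (cutPos iB) (ofLex x)

variable {iA iB}

theorem sumCut_map_eq_pointCut (hA : ∀ c, iA (C.f c) = A.f (iA c))
    (hB : ∀ c, iB (C.f c) = B.f (iB c)) (x : A.carrier ⊕ₗ B.carrier) (c : C.carrier)
    (h : sumCut iA iB x = pointCut c) : sumCut iA iB (sumLexMap A B x) = pointCut (C.f c) := by
  rcases x with a | b
  exacts [cutPos_map_eq_pointCut hA h, cutPos_map_eq_pointCut hB h]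

theorem exists_pointCut_between_sumCut_map (hA : ∀ c, iA (C.f c) = A.f (iA c))
    (hB : ∀ c, iB (C.f c) = B.f (iB c)) (x y : A.carrier ⊕ₗ B.carrier)
    (h : sumCut iA iB x < sumCut iA iB y) :
    ∃ c, sumCut iA iB (sumLexMap A B x) ≤ pointCut c ∧
      pointCut c ≤ sumCut iA iB (sumLexMap A B y) := by
  rcases x with a | b <;> rcases y with a' | b'
  exacts [exists_pointCut_between_cutPos_map hA hA h, exists_pointCut_between_cutPos_map hA hB h,
    exists_pointCut_between_cutPos_map hB hA h, exists_pointCut_between_cutPos_map hB hB h]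

theorem amalgKey_inl_eq_inr (hA : ∀ c, iA (C.f c) = A.f (iA c))
    (hB : ∀ c, iB (C.f c) = B.f (iB c)) (c : C.carrier) :
    amalgKey (sumLexMap A B) (sumCut iA iB) pointCut (toLex (.inl (iA c))) =
      amalgKey (sumLexMap A B) (sumCut iA iB) pointCut (toLex (.inr (iB c))) :=
  amalgKey_eq_of_pos_eq (sumCut_map_eq_pointCut hA hB) (cutPos_apply iA c) (cutPos_apply iB c)

theorem exists_eq_of_amalgKey_inl_eq_inr {a : A.carrier} {b : B.carrier}
    (h : amalgKey (sumLexMap A B) (sumCut iA iB) pointCut (toLex (.inl a)) =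
      amalgKey (sumLexMap A B) (sumCut iA iB) pointCut (toLex (.inr b))) : ∃ c, iA c = a := by
  obtain ⟨c, hc⟩ := exists_pos_eq_of_amalgKey_eq h Sum.inl_ne_inr
  exact ⟨c, (cutPos_eq_pointCut_iff.1 hc).symm⟩

end Amalgam

/-- The class of linearly ordered sets with one order preserving unary operation
has the strong amalgamation property. -/
theorem linear_orders_one_monotone_op_strong_amalgamation
    (A B C : LinOrderMono)
    (iA : C.carrier ↪o A.carrier) (iB : C.carrier ↪o B.carrier)
    (hA : ∀ c, iA (C.f c) = A.f (iA c))
    (hB : ∀ c, iB (C.f c) = B.f (iB c)) :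
    ∃ (D : LinOrderMono) (jA : A.carrier ↪o D.carrier)
      (jB : B.carrier ↪o D.carrier),
      (∀ a, jA (A.f a) = D.f (jA a)) ∧
      (∀ b, jB (B.f b) = D.f (jB b)) ∧
      (∀ c, jA (iA c) = jB (iB c)) ∧
      Set.range jA ∩ Set.range jB = Set.range (fun c => jA (iA c)) := by
  have hkey := amalgKey_map_le sumLexMap_monotone (sumCut_map_eq_pointCut hA hB)
    (exists_pointCut_between_sumCut_map hA hB)
  let jA := ofKeyEmbedding _ _ hkey _ (amalgKey_comp_strictMono Sum.Lex.inl_strictMono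
    (fun _ => rfl) A.mono (cutPos_mono iA) eq_of_cutPos_eq_pointCut)
  let jB := ofKeyEmbedding _ _ hkey _ (amalgKey_comp_strictMono Sum.Lex.inr_strictMono
    (fun _ => rfl) B.mono (cutPos_mono iB) eq_of_cutPos_eq_pointCut)
  have hglue (c) : jA (iA c) = jB (iB c) := Subtype.ext (amalgKey_inl_eq_inr hA hB c)
  refine ⟨_, jA, jB, ofKeyEmbedding_map _ _ hkey _ (fun _ => rfl),
    ofKeyEmbedding_map _ _ hkey _ (fun _ => rfl), hglue, ?_⟩
  ext k
  constructor
  · rintro ⟨⟨a, rfl⟩, ⟨b, hb⟩⟩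
    obtain ⟨c, rfl⟩ := exists_eq_of_amalgKey_inl_eq_inr (congrArg Subtype.val hb).symm
    exact ⟨c, rfl⟩
  · rintro ⟨c, rfl⟩
    exact ⟨⟨iA c, rfl⟩, ⟨iB c, (hglue c).symm⟩⟩
end

section
/- The class of linearly ordered sets equipped with one strict order preserving unary operation has the amalgamation property: whenever A, B, C are linearly ordered sets with strictly monotone unary operations f_A, f_B, f_C and i_A : C → A, i_B : C → B are order embeddings satisfying i_A ∘ f_C = f_A ∘ i_A and i_B ∘ f_C = f_B ∘ i_B, there exist a linearly ordered set D with a strictly monotone unary operation f_D and order embeddings j_A : A → D, j_B : B → D commuting with the operations, such that j_A ∘ i_A = j_B ∘ i_B. -/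
/-- A linearly ordered set equipped with one strict order preserving (strictly
monotone) unary operation. -/
structure LinOrderStrictMono where
  carrier : Type
  [linOrd : LinearOrder carrier]
  f : carrier → carrier
  smono : StrictMono f

attribute [instance] LinOrderStrictMono.linOrd

/-!
A point `x` of an extension `i : C ↪o X` is placed relative to `C` by its `position`: the cut
`{c | i c ≤ x}`, refined by whether `x` is itself an image point. A strict inequality between
positions of points of two extensions is witnessed by a point `c` of `C` separating them, and since
the embeddings commute with the operations, `g c` then separates their images: the operations
preserve strict inequalities of positions. Hence the code of `x`, the lexicographically ordered
sequence of positions of `x, f x, f² x, …`, gives a total preorder on `A ⊕ B` that extends the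
orders of `A` and `B` and is reflected and preserved by the operations. On equal codes the point
of `A` comes first, unless the orbit reaches the image of `C`: then the code determines the point,
and `iA c`, `iB c` get identified. The amalgam is the antisymmetrization of this preorder.
-/

open Function Set

theorem Monotone.le_and_imp_le_iff {α κ : Type*} [LinearOrder α] [Preorder κ] {k : α → κ}
    (hk : Monotone k) {x y : α} : k x ≤ k y ∧ (k y ≤ k x → x ≤ y) ↔ x ≤ y :=
  ⟨fun h => (le_total x y).elim id fun hyx => h.2 (hk hyx), fun h => ⟨hk h, fun _ => h⟩⟩

section OrbitCode

variable {α β L : Type*}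

def orbitCode (P : α → L) (F : α → α) (x : α) : Lex (ℕ → L) :=
  toLex fun n => P (F^[n] x)

variable {P : α → L} {F : α → α}

theorem orbitCode_map_eq {x y : α} (h : orbitCode P F x = orbitCode P F y) :
    orbitCode P F (F x) = orbitCode P F (F y) :=
  congrArg (fun s : Lex (ℕ → L) => toLex fun n => ofLex s (n + 1)) h

theorem orbitCode_map_lt [LinearOrder L] (hP : ∀ x y, P x < P y → P (F x) < P (F y)) {x y : α}
    (h : orbitCode P F x < orbitCode P F y) : orbitCode P F (F x) < orbitCode P F (F y) := by
  obtain ⟨n, hpre, hn⟩ := h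
  cases n with
  | zero => exact ⟨0, fun m hm => absurd hm m.not_lt_zero, hP _ _ hn⟩
  | succ n => exact ⟨n, fun m hm => hpre (m + 1) (Nat.succ_lt_succ hm), hn⟩

theorem orbitCode_map_le_map_iff [LinearOrder L] (hP : ∀ x y, P x < P y → P (F x) < P (F y))
    (x y : α) :
    orbitCode P F (F x) ≤ orbitCode P F (F y) ↔ orbitCode P F x ≤ orbitCode P F y := by
  refine ⟨fun h => not_lt.1 fun h' => (orbitCode_map_lt hP h').not_ge h, fun h => ?_⟩
  rcases h.lt_or_eq with h | h
  exacts [(orbitCode_map_lt hP h).le, (orbitCode_map_eq h).le]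

theorem orbitCode_mono [Preorder α] [LinearOrder L] (hP : Monotone P) (hF : Monotone F) :
    Monotone (orbitCode P F) :=
  fun _ _ h => Pi.toLex_monotone fun n => hP (hF.iterate n h)

theorem orbitCode_semiconj {P' : β → L} {G : β → β} {e : α → β} (he : Semiconj e F G)
    (hP : ∀ x, P' (e x) = P x) (x : α) : orbitCode P' G (e x) = orbitCode P F x := by
  simp only [orbitCode, ← he.iterate_right _ x, hP]

end OrbitCode

section Position

variable {γ α β : Type*} [LinearOrder γ] [LinearOrder α] [LinearOrder β]
  (i : γ ↪o α) (j : γ ↪o β)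

def cut (x : α) : LowerSet γ :=
  ⟨{c | i c ≤ x}, fun _ _ hcd hd => (i.le_iff_le.2 hcd).trans hd⟩

/-- The flag puts an image point `i c` just below the other points with the same cut. -/
def position (x : α) : LowerSet γ ×ₗ Prop :=
  toLex (cut i x, x ∉ range i)

theorem mem_cut {x : α} {c : γ} : c ∈ cut i x ↔ i c ≤ x := Iff.rfl

theorem cut_apply_embedding (c : γ) : cut i (i c) = LowerSet.Iic c := by
  ext; simp [mem_cut]

theorem position_apply_embedding (c : γ) : position i (i c) = toLex (LowerSet.Iic c, False) := by
  simp [position, cut_apply_embedding]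

theorem position_mono : Monotone (position i) := by
  intro x y hxy
  have hcut : cut i x ≤ cut i y := fun c hc => (mem_cut i).2 (hc.trans hxy)
  simp only [position, Prod.Lex.toLex_le_toLex, le_Prop_eq]
  refine hcut.lt_or_eq.imp id fun h => ⟨h, ?_⟩
  rintro hx ⟨c, rfl⟩
  have hc : c ∈ cut i x := by rw [h]; exact le_rfl
  exact hx ⟨c, le_antisymm hc hxy⟩

theorem eq_of_position_eq {x : α} {c : γ} (h : position i x = position i (i c)) : x = i c := by
  rw [position_apply_embedding, position, toLex_inj, Prod.mk.injEq] at h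
  obtain ⟨d, rfl⟩ : x ∈ range i := by simpa using h.2
  rw [cut_apply_embedding, LowerSet.Iic_inj] at h
  rw [h.1]

theorem mem_range_iff_of_position_eq {x : α} {y : β} (h : position i x = position j y) :
    x ∈ range i ↔ y ∈ range j := by
  rw [position, position, toLex_inj, Prod.mk.injEq] at h
  exact not_iff_not.1 (Iff.of_eq h.2)

theorem position_lt_position_of_lt {x y : α} (hxy : x < y) (h : x ∈ range i ∨ y ∈ range i) :
    position i x < position i y := by
  refine (position_mono i hxy.le).lt_of_ne fun he => hxy.ne ?_
  rcases h with ⟨c, rfl⟩ | ⟨c, rfl⟩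
  exacts [(eq_of_position_eq i he.symm).symm, eq_of_position_eq i he]

theorem position_lt_position_iff {x : α} {y : β} :
    position i x < position j y ↔ ∃ c, x < i c ∧ j c ≤ y ∨ x ≤ i c ∧ j c < y := by
  constructor
  · simp only [position, Prod.Lex.toLex_lt_toLex]
    rintro (hlt | ⟨heq, hflag⟩)
    · obtain ⟨c, hcy, hcx⟩ := Set.not_subset.1 (mt LowerSet.coe_subset_coe.1 hlt.not_ge)
      exact ⟨c, Or.inl ⟨not_le.1 hcx, hcy⟩⟩
    · obtain ⟨⟨c, rfl⟩, hy⟩ : x ∈ range i ∧ y ∉ range j := by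
        change (x ∉ range i → y ∉ range j) ∧ ¬(y ∉ range j → x ∉ range i) at hflag
        tauto
      have hc : j c ≤ y := (mem_cut j).1 (heq ▸ (mem_cut i).2 le_rfl)
      exact ⟨c, Or.inr ⟨le_rfl, hc.lt_of_ne fun h => hy ⟨c, h⟩⟩⟩
  · rintro ⟨c, ⟨hx, hy⟩ | ⟨hx, hy⟩⟩
    · calc position i x < position i (i c) := position_lt_position_of_lt i hx (Or.inr ⟨c, rfl⟩)
        _ = position j (j c) := by rw [position_apply_embedding, position_apply_embedding]
        _ ≤ position j y := position_mono j hy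
    · calc position i x ≤ position i (i c) := position_mono i hx
        _ = position j (j c) := by rw [position_apply_embedding, position_apply_embedding]
        _ < position j y := position_lt_position_of_lt j hy (Or.inl ⟨c, rfl⟩)

theorem position_map_lt_map {g : γ → γ} {f : α → α} {f' : β → β} (hi : Semiconj i g f)
    (hj : Semiconj j g f') (hf : StrictMono f) (hf' : StrictMono f') {x : α} {y : β}
    (h : position i x < position j y) : position i (f x) < position j (f' y) := by
  obtain ⟨c, hc⟩ := (position_lt_position_iff i j).1 h
  refine (position_lt_position_iff i j).2 ⟨g c, ?_⟩
  rwa [hi c, hj c, hf.lt_iff_lt, hf.le_iff_le, hf'.lt_iff_lt, hf'.le_iff_le]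

end Position

section ReachesRange

variable {γ α β : Type*} [LinearOrder γ] [LinearOrder α] [LinearOrder β]
  {i : γ ↪o α} {j : γ ↪o β} {g : γ → γ} {f : α → α} {f' : β → β}

def ReachesRange (i : γ ↪o α) (f : α → α) (x : α) : Prop :=
  ∃ n, f^[n] x ∈ range i

theorem reachesRange_map_iff (hi : Semiconj i g f) {x : α} :
    ReachesRange i f (f x) ↔ ReachesRange i f x := by
  refine ⟨fun ⟨n, hn⟩ => ⟨n + 1, hn⟩, fun ⟨n, c, hc⟩ => ⟨n, g c, ?_⟩⟩
  rw [hi c, hc, ← iterate_succ_apply' f n x]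
  rfl

theorem reachesRange_iff_of_orbitCode_eq {x : α} {y : β}
    (h : orbitCode (position i) f x = orbitCode (position j) f' y) :
    ReachesRange i f x ↔ ReachesRange j f' y :=
  exists_congr fun n => mem_range_iff_of_position_eq i j (congrFun (congrArg ofLex h) n)

theorem eq_of_orbitCode_eq (hf : Injective f) {x y : α}
    (h : orbitCode (position i) f x = orbitCode (position i) f y) (hx : ReachesRange i f x) :
    x = y := by
  obtain ⟨n, c, hc⟩ := hx
  have hy : f^[n] y = i c :=
    eq_of_position_eq i (hc ▸ (congrFun (congrArg ofLex h) n).symm)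
  exact hf.iterate n (hc.symm.trans hy.symm)

theorem orbitCode_embedding (hi : Semiconj i g f) (c : γ) :
    orbitCode (position i) f (i c) = toLex fun n => toLex (LowerSet.Iic (g^[n] c), False) := by
  simp only [orbitCode, ← hi.iterate_right _ c, position_apply_embedding]

end ReachesRange

/-- A copy of `A ⊕ B`; the embeddings are parameters only so that its order can depend on them. -/
inductive Amalgam_s4 {A B C : LinOrderStrictMono} (iA : C.carrier ↪o A.carrier)
    (iB : C.carrier ↪o B.carrier) : Type
  | inl : A.carrier → Amalgam_s4 iA iB
  | inr : B.carrier → Amalgam_s4 iA iB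

namespace Amalgam_s4

variable {A B C : LinOrderStrictMono} (iA : C.carrier ↪o A.carrier)
  (iB : C.carrier ↪o B.carrier)

def map : Amalgam_s4 iA iB → Amalgam_s4 iA iB
  | inl a => inl (A.f a)
  | inr b => inr (B.f b)

def pos : Amalgam_s4 iA iB → LowerSet C.carrier ×ₗ Prop
  | inl a => position iA a
  | inr b => position iB b

def code : Amalgam_s4 iA iB → Lex (ℕ → LowerSet C.carrier ×ₗ Prop) :=
  orbitCode (pos iA iB) (map iA iB)

theorem code_inl (a : A.carrier) : code iA iB (inl a) = orbitCode (position iA) A.f a :=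
  orbitCode_semiconj (e := inl) (P' := pos iA iB) (fun _ => rfl) (fun _ => rfl) a

theorem code_inr (b : B.carrier) : code iA iB (inr b) = orbitCode (position iB) B.f b :=
  orbitCode_semiconj (e := inr) (P' := pos iA iB) (fun _ => rfl) (fun _ => rfl) b

def TieLE : Amalgam_s4 iA iB → Amalgam_s4 iA iB → Prop
  | inl a, inl a' => a ≤ a'
  | inr b, inr b' => b ≤ b'
  | inl _, inr _ => True
  | inr b, inl _ => ReachesRange iB B.f b

variable {iA iB}

theorem tieLE_refl : ∀ x : Amalgam_s4 iA iB, TieLE iA iB x x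
  | inl a => le_refl a
  | inr b => le_refl b

theorem tieLE_total : ∀ x y : Amalgam_s4 iA iB, TieLE iA iB x y ∨ TieLE iA iB y x
  | inl a, inl a' => le_total a a'
  | inr b, inr b' => le_total b b'
  | inl _, inr _ => Or.inl trivial
  | inr _, inl _ => Or.inr trivial

theorem tieLE_trans {x y z : Amalgam_s4 iA iB} (hxy : code iA iB x = code iA iB y)
    (hyz : code iA iB y = code iA iB z) (h₁ : TieLE iA iB x y) (h₂ : TieLE iA iB y z) :
    TieLE iA iB x z := by
  rcases x with a | b <;> rcases y with a' | b' <;> rcases z with a'' | b'' <;>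
    simp only [code_inl, code_inr, TieLE] at hxy hyz h₁ h₂ ⊢
  · exact h₁.trans h₂
  · exact le_of_eq (eq_of_orbitCode_eq A.smono.injective (hxy.trans hyz)
      ((reachesRange_iff_of_orbitCode_eq hxy).2 h₂))
  · exact h₁
  · exact le_of_eq (eq_of_orbitCode_eq B.smono.injective (hxy.trans hyz) h₁)
  · exact (reachesRange_iff_of_orbitCode_eq hxy).2 h₂
  · exact h₁.trans h₂

instance : Preorder (Amalgam_s4 iA iB) where
  le x y := code iA iB x ≤ code iA iB y ∧ (code iA iB y ≤ code iA iB x → TieLE iA iB x y)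
  le_refl x := ⟨le_rfl, fun _ => tieLE_refl x⟩
  le_trans x y z := fun ⟨hxy, txy⟩ ⟨hyz, tyz⟩ => ⟨hxy.trans hyz, fun hzx =>
    have hyx : code iA iB y ≤ code iA iB x := hyz.trans hzx
    have hzy : code iA iB z ≤ code iA iB y := hzx.trans hxy
    tieLE_trans (hxy.antisymm hyx) (hyz.antisymm hzy) (txy hyx) (tyz hzy)⟩

theorem le_def {x y : Amalgam_s4 iA iB} : x ≤ y ↔
    code iA iB x ≤ code iA iB y ∧ (code iA iB y ≤ code iA iB x → TieLE iA iB x y) :=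
  Iff.rfl

instance : @Std.Total (Amalgam_s4 iA iB) (· ≤ ·) where
  total x y := by
    rcases lt_trichotomy (code iA iB x) (code iA iB y) with h | h | h
    · exact Or.inl ⟨h.le, fun h' => absurd h' h.not_ge⟩
    · exact (tieLE_total x y).imp (fun t => ⟨h.le, fun _ => t⟩) fun t => ⟨h.ge, fun _ => t⟩
    · exact Or.inr ⟨h.le, fun h' => absurd h' h.not_ge⟩

theorem inl_le_inl_iff {a a' : A.carrier} : (inl a : Amalgam_s4 iA iB) ≤ inl a' ↔ a ≤ a' := by
  rw [le_def, code_inl, code_inl]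
  exact (orbitCode_mono (position_mono iA) A.smono.monotone).le_and_imp_le_iff

theorem inr_le_inr_iff {b b' : B.carrier} : (inr b : Amalgam_s4 iA iB) ≤ inr b' ↔ b ≤ b' := by
  rw [le_def, code_inr, code_inr]
  exact (orbitCode_mono (position_mono iB) B.smono.monotone).le_and_imp_le_iff

theorem inl_antisymmRel_inr (hA : Semiconj iA C.f A.f) (hB : Semiconj iB C.f B.f)
    (c : C.carrier) :
    AntisymmRel (· ≤ ·) (inl (iA c) : Amalgam_s4 iA iB) (inr (iB c)) := by
  have h : code iA iB (inl (iA c)) = code iA iB (inr (iB c)) := by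
    rw [code_inl, code_inr, orbitCode_embedding hA, orbitCode_embedding hB]
  exact ⟨⟨h.le, fun _ => trivial⟩, ⟨h.ge, fun _ => ⟨0, c, rfl⟩⟩⟩

theorem pos_map_lt_map (hA : Semiconj iA C.f A.f) (hB : Semiconj iB C.f B.f)
    {x y : Amalgam_s4 iA iB} (h : pos iA iB x < pos iA iB y) :
    pos iA iB (map iA iB x) < pos iA iB (map iA iB y) := by
  cases x <;> cases y
  · exact position_map_lt_map iA iA hA hA A.smono A.smono h
  · exact position_map_lt_map iA iB hA hB A.smono B.smono h
  · exact position_map_lt_map iB iA hB hA B.smono A.smono h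
  · exact position_map_lt_map iB iB hB hB B.smono B.smono h

theorem tieLE_map_iff (hB : Semiconj iB C.f B.f) {x y : Amalgam_s4 iA iB} :
    TieLE iA iB (map iA iB x) (map iA iB y) ↔ TieLE iA iB x y := by
  cases x <;> cases y
  · exact A.smono.le_iff_le
  · exact Iff.rfl
  · exact reachesRange_map_iff hB
  · exact B.smono.le_iff_le

theorem code_map_le_map_iff (hA : Semiconj iA C.f A.f) (hB : Semiconj iB C.f B.f)
    (x y : Amalgam_s4 iA iB) :
    code iA iB (map iA iB x) ≤ code iA iB (map iA iB y) ↔ code iA iB x ≤ code iA iB y :=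
  orbitCode_map_le_map_iff (P := pos iA iB) (F := map iA iB) (fun _ _ => pos_map_lt_map hA hB)
    x y

theorem map_le_map_iff (hA : Semiconj iA C.f A.f) (hB : Semiconj iB C.f B.f)
    {x y : Amalgam_s4 iA iB} : map iA iB x ≤ map iA iB y ↔ x ≤ y := by
  simp only [le_def, code_map_le_map_iff hA hB, tieLE_map_iff hB]

theorem map_lt_map_iff (hA : Semiconj iA C.f A.f) (hB : Semiconj iB C.f B.f)
    {x y : Amalgam_s4 iA iB} : map iA iB x < map iA iB y ↔ x < y := by
  simp only [lt_iff_le_not_ge, map_le_map_iff hA hB]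

end Amalgam_s4

namespace LinOrderStrictMono

variable {A B C : LinOrderStrictMono} {iA : C.carrier ↪o A.carrier}
  {iB : C.carrier ↪o B.carrier}
  (hA : Semiconj iA C.f A.f) (hB : Semiconj iB C.f B.f)

noncomputable def amalgam : LinOrderStrictMono where
  carrier := Antisymmetrization (Amalgam_s4 iA iB) (· ≤ ·)
  linOrd := by classical exact inferInstance
  f := OrderHom.antisymmetrization
    ⟨Amalgam_s4.map iA iB, fun _ _ => (Amalgam_s4.map_le_map_iff hA hB).2⟩
  smono x y := by
    induction x using Antisymmetrization.ind
    induction y using Antisymmetrization.ind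
    exact (Amalgam_s4.map_lt_map_iff hA hB).2

noncomputable def amalgamInl : A.carrier ↪o (amalgam hA hB).carrier :=
  OrderEmbedding.ofMapLEIff (fun a => toAntisymmetrization _ (Amalgam_s4.inl a))
    fun _ _ => Amalgam_s4.inl_le_inl_iff

noncomputable def amalgamInr : B.carrier ↪o (amalgam hA hB).carrier :=
  OrderEmbedding.ofMapLEIff (fun b => toAntisymmetrization _ (Amalgam_s4.inr b))
    fun _ _ => Amalgam_s4.inr_le_inr_iff

end LinOrderStrictMono

/-- The class of linearly ordered sets with one strict order preserving unary
operation has the amalgamation property. -/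
theorem linear_orders_one_strict_monotone_op_amalgamation
    (A B C : LinOrderStrictMono)
    (iA : C.carrier ↪o A.carrier) (iB : C.carrier ↪o B.carrier)
    (hA : ∀ c, iA (C.f c) = A.f (iA c))
    (hB : ∀ c, iB (C.f c) = B.f (iB c)) :
    ∃ (D : LinOrderStrictMono) (jA : A.carrier ↪o D.carrier)
      (jB : B.carrier ↪o D.carrier),
      (∀ a, jA (A.f a) = D.f (jA a)) ∧
      (∀ b, jB (B.f b) = D.f (jB b)) ∧
      (∀ c, jA (iA c) = jB (iB c)) :=
  ⟨LinOrderStrictMono.amalgam hA hB, LinOrderStrictMono.amalgamInl hA hB,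
    LinOrderStrictMono.amalgamInr hA hB, fun _ => rfl, fun _ => rfl,
    fun c => Quotient.sound (Amalgam_s4.inl_antisymmRel_inr hA hB c)⟩
end

section
/- The class of linearly ordered sets with one strict order preserving unary operation does not have the strong amalgamation property: there exist linearly ordered sets A, B, C with strictly monotone unary operations f_A, f_B, f_C and order embeddings i_A : C → A, i_B : C → B commuting with the operations, such that for every linearly ordered set D with a strictly monotone unary operation f_D and every pair of order embeddings j_A : A → D, j_B : B → D commuting with the operations and satisfying j_A ∘ i_A = j_B ∘ i_B, the intersection of the ranges of j_A and j_B is strictly larger than the range of j_A ∘ i_A. (One may take C = ℕ with the successor operation, and A, B obtained from C by adding a new element a, respectively b, below 0 with f(a) = 0, respectively f(b) = 0.) -/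
/-- The operation on `WithBot ℕ`: bottom goes to 0, `n` goes to `n+1`. -/
def botSucc : WithBot ℕ → WithBot ℕ
  | ⊥ => (0 : ℕ)
  | (n : ℕ) => ((n + 1 : ℕ) : WithBot ℕ)

lemma botSucc_strictMono : StrictMono botSucc := by
  intro a b hab
  induction a using WithBot.recBotCoe with
  | bot =>
      induction b using WithBot.recBotCoe with
      | bot => exact absurd hab (lt_irrefl _)
      | coe n =>
          show ((0 : ℕ) : WithBot ℕ) < ((n + 1 : ℕ) : WithBot ℕ)
          exact_mod_cast Nat.succ_pos n
  | coe m =>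
      induction b using WithBot.recBotCoe with
      | bot => exact absurd hab (by simp)
      | coe n =>
          show ((m + 1 : ℕ) : WithBot ℕ) < ((n + 1 : ℕ) : WithBot ℕ)
          have : m < n := by exact_mod_cast hab
          exact_mod_cast Nat.succ_lt_succ this

def natBotEmb : ℕ ↪o WithBot ℕ :=
  { toFun := fun n => (n : WithBot ℕ)
    inj' := WithBot.coe_injective
    map_rel_iff' := WithBot.coe_le_coe }

/-- The class of linearly ordered sets with one strict order preserving unary
operation does not have the strong amalgamation property: there is an
amalgamation triple such that in every amalgam the intersection of the ranges
of the two embeddings is strictly larger than the range of the common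
composition. -/
theorem linear_orders_one_strict_monotone_op_not_strong_amalgamation :
    ∃ (A B C : LinOrderStrictMono)
      (iA : C.carrier ↪o A.carrier) (iB : C.carrier ↪o B.carrier),
      (∀ c, iA (C.f c) = A.f (iA c)) ∧
      (∀ c, iB (C.f c) = B.f (iB c)) ∧
      ∀ (D : LinOrderStrictMono) (jA : A.carrier ↪o D.carrier)
        (jB : B.carrier ↪o D.carrier),
        (∀ a, jA (A.f a) = D.f (jA a)) →
        (∀ b, jB (B.f b) = D.f (jB b)) →
        (∀ c, jA (iA c) = jB (iB c)) →
        Set.range (fun c => jA (iA c)) ⊂ Set.range jA ∩ Set.range jB := by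
  refine ⟨⟨WithBot ℕ, botSucc, botSucc_strictMono⟩,
    ⟨WithBot ℕ, botSucc, botSucc_strictMono⟩,
    ⟨ℕ, Nat.succ, fun a b h => Nat.succ_lt_succ h⟩,
    natBotEmb, natBotEmb, fun c => rfl, fun c => rfl, ?_⟩
  intro D jA jB hA hB hcomp
  constructor
  · rintro x ⟨c, rfl⟩
    exact ⟨⟨natBotEmb c, rfl⟩, ⟨natBotEmb c, (hcomp c).symm⟩⟩
  · intro hsub
    have hfa : D.f (jA ⊥) = D.f (jB ⊥) := by
      rw [← hA ⊥, ← hB ⊥]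
      have h0 : botSucc ⊥ = natBotEmb 0 := rfl
      show jA (botSucc ⊥) = jB (botSucc ⊥)
      rw [h0]
      exact hcomp 0
    have hab : jA (⊥ : WithBot ℕ) = jB ⊥ := D.smono.injective hfa
    have hmem : jA (⊥ : WithBot ℕ) ∈ Set.range jA ∩ Set.range jB :=
      ⟨⟨⊥, rfl⟩, ⟨⊥, hab.symm⟩⟩
    obtain ⟨c, hc⟩ := hsub hmem
    have : natBotEmb c = (⊥ : WithBot ℕ) := jA.injective hc
    simp [natBotEmb] at this
end

section
/- The class of linearly ordered sets with two order preserving unary operations does not have the amalgamation property: there exist finite linearly ordered sets A, B, C (with |C| = 1 and |A| = |B| = 2 or 3), each equipped with two monotone unary operations f and h, and order embeddings i_A : C → A, i_B : C → B commuting with both operations, such that there is no linearly ordered set D with two monotone unary operations f_D, h_D admitting order embeddings j_A : A → D, j_B : B → D commuting with both operations and satisfying j_A ∘ i_A = j_B ∘ i_B. -/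
/-- A linearly ordered set equipped with two order preserving (monotone) unary
operations. -/
structure LinOrderTwoMono where
  carrier : Type
  [linOrd : LinearOrder carrier]
  f : carrier → carrier
  h : carrier → carrier
  monoF : Monotone f
  monoH : Monotone h

attribute [instance] LinOrderTwoMono.linOrd

/-- The class of linearly ordered sets with two order preserving unary operations
does not have the amalgamation property, as witnessed by finite structures with
`|C| = 1` and `|A| = |B| = 2` or `3`. -/
theorem linear_orders_two_monotone_ops_not_amalgamation :
    ∃ (A B C : LinOrderTwoMono),
      Nat.card C.carrier = 1 ∧
      ((Nat.card A.carrier = 2 ∧ Nat.card B.carrier = 2) ∨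
        (Nat.card A.carrier = 3 ∧ Nat.card B.carrier = 3)) ∧
      ∃ (iA : C.carrier ↪o A.carrier) (iB : C.carrier ↪o B.carrier),
        (∀ c, iA (C.f c) = A.f (iA c)) ∧ (∀ c, iA (C.h c) = A.h (iA c)) ∧
        (∀ c, iB (C.f c) = B.f (iB c)) ∧ (∀ c, iB (C.h c) = B.h (iB c)) ∧
        ¬ ∃ (D : LinOrderTwoMono) (jA : A.carrier ↪o D.carrier)
            (jB : B.carrier ↪o D.carrier),
            (∀ a, jA (A.f a) = D.f (jA a)) ∧ (∀ a, jA (A.h a) = D.h (jA a)) ∧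
            (∀ b, jB (B.f b) = D.f (jB b)) ∧ (∀ b, jB (B.h b) = D.h (jB b)) ∧
            (∀ c, jA (iA c) = jB (iB c)) := by
  refine ⟨⟨Bool, fun _ => true, id, monotone_const, monotone_id⟩,
          ⟨Bool, id, fun _ => true, monotone_id, monotone_const⟩,
          ⟨Unit, id, id, monotone_id, monotone_id⟩, ?_, ?_, ?_⟩
  · simp
  · left; simp
  · refine ⟨⟨⟨fun _ => true, fun a b _ => Subsingleton.elim a b⟩, by simp⟩,
      ⟨⟨fun _ => true, fun a b _ => Subsingleton.elim a b⟩, by simp⟩,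
      fun _ => rfl, fun _ => rfl, fun _ => rfl, fun _ => rfl, ?_⟩
    rintro ⟨D, jA, jB, hfA, hhA, hfB, hhB, hcomm⟩
    have hz : jA true = jB true := hcomm ()
    have hxz : jA false < jA true := jA.strictMono (by simp)
    have hyz : jB false < jB true := jB.strictMono (by simp)
    rcases le_total (jA false) (jB false) with hle | hle
    · have := D.monoF hle
      rw [← hfA false, ← hfB false] at this
      simp only [id_eq] at this
      -- this : jA true ≤ jB false, but jB false < jB true = jA true
      exact absurd (this.trans_lt (hz ▸ hyz)) (lt_irrefl _)
    · have := D.monoH hle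
      rw [← hhA false, ← hhB false] at this
      simp only [id_eq] at this
      -- this : jB true ≤ jA false, but jA false < jA true = jB true
      exact absurd (this.trans_lt (hz ▸ hxz)) (lt_irrefl _)
end

section
/- There exist linearly ordered sets A, B, C, each equipped with two strictly monotone unary operations f and h, and order embeddings i_A : C → A, i_B : C → B commuting with both operations, such that there is no linearly ordered set D equipped with two (not necessarily strictly) monotone unary operations f_D, h_D admitting order embeddings j_A : A → D, j_B : B → D commuting with both operations and satisfying j_A ∘ i_A = j_B ∘ i_B. In particular, the class of linearly ordered sets with two strict order preserving unary operations does not have the amalgamation property. -/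
/-- A linearly ordered set equipped with two strict order preserving (strictly
monotone) unary operations. -/
structure LinOrderTwoStrictMono where
  carrier : Type
  [linOrd : LinearOrder carrier]
  f : carrier → carrier
  h : carrier → carrier
  smonoF : StrictMono f
  smonoH : StrictMono h

attribute [instance] LinOrderTwoStrictMono.linOrd

/-!
`C` is `ℤ` with both operations `n ↦ 3n`, embedded into `A` and `B` (both `ℤ`) by `n ↦ 2n`, so
that the odd numbers are new points. In `A` the new point `1` is sent by `f` onto the image of
`2 ∈ C` and by `h` onto the image of `1 ∈ C`; in `B` the other way round. In an amalgam the
images of these two new points would then be ordered one way by `f` and the other way by `h`,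
which no pair of monotone operations on a linear order allows.
-/

theorem Monotone.not_lt_and_lt {α β : Type*} [LinearOrder α] [Preorder β] {f g : α → β}
    (hf : Monotone f) (hg : Monotone g) (x y : α) : ¬ (f y < f x ∧ g x < g y) :=
  fun ⟨hfyx, hgxy⟩ => (hf.reflect_lt hfyx).asymm (hg.reflect_lt hgxy)

def triplePlusParity (k : ℤ) : ℤ := 3 * k + k % 2

def tripleMinusParity (k : ℤ) : ℤ := 3 * k - k % 2

theorem strictMono_triplePlusParity : StrictMono triplePlusParity := by
  intro a b hab
  unfold triplePlusParity
  omega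

theorem strictMono_tripleMinusParity : StrictMono tripleMinusParity := by
  intro a b hab
  unfold tripleMinusParity
  omega

abbrev crossingA : LinOrderTwoStrictMono where
  carrier := ℤ
  f := triplePlusParity
  h := tripleMinusParity
  smonoF := strictMono_triplePlusParity
  smonoH := strictMono_tripleMinusParity

abbrev crossingB : LinOrderTwoStrictMono where
  carrier := ℤ
  f := tripleMinusParity
  h := triplePlusParity
  smonoF := strictMono_tripleMinusParity
  smonoH := strictMono_triplePlusParity

abbrev tripleInt : LinOrderTwoStrictMono where
  carrier := ℤ
  f := (3 * ·)
  h := (3 * ·)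
  smonoF := strictMono_mul_left_of_pos three_pos
  smonoH := strictMono_mul_left_of_pos three_pos

noncomputable def doubleEmbedding : ℤ ↪o ℤ :=
  OrderEmbedding.ofStrictMono (2 * ·) (strictMono_mul_left_of_pos two_pos)

theorem doubleEmbedding_three_mul_eq_triplePlusParity (n : ℤ) :
    doubleEmbedding (3 * n) = triplePlusParity (doubleEmbedding n) := by
  simp only [doubleEmbedding, OrderEmbedding.coe_ofStrictMono, triplePlusParity]
  omega

theorem doubleEmbedding_three_mul_eq_tripleMinusParity (n : ℤ) :
    doubleEmbedding (3 * n) = tripleMinusParity (doubleEmbedding n) := by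
  simp only [doubleEmbedding, OrderEmbedding.coe_ofStrictMono, tripleMinusParity]
  omega

/-- There is a triple of linearly ordered sets with two strictly monotone unary
operations which cannot be amalgamated even into a linearly ordered set with two
(not necessarily strictly) monotone unary operations.  In particular, the class
of linearly ordered sets with two strict order preserving unary operations does
not have the amalgamation property. -/
theorem linear_orders_two_strict_monotone_ops_not_amalgamation :
    ∃ (A B C : LinOrderTwoStrictMono)
      (iA : C.carrier ↪o A.carrier) (iB : C.carrier ↪o B.carrier),
      (∀ c, iA (C.f c) = A.f (iA c)) ∧ (∀ c, iA (C.h c) = A.h (iA c)) ∧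
      (∀ c, iB (C.f c) = B.f (iB c)) ∧ (∀ c, iB (C.h c) = B.h (iB c)) ∧
      ¬ ∃ (D : LinOrderTwoMono) (jA : A.carrier ↪o D.carrier)
          (jB : B.carrier ↪o D.carrier),
          (∀ a, jA (A.f a) = D.f (jA a)) ∧ (∀ a, jA (A.h a) = D.h (jA a)) ∧
          (∀ b, jB (B.f b) = D.f (jB b)) ∧ (∀ b, jB (B.h b) = D.h (jB b)) ∧
          (∀ c, jA (iA c) = jB (iB c)) := by
  refine ⟨crossingA, crossingB, tripleInt, doubleEmbedding, doubleEmbedding,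
    doubleEmbedding_three_mul_eq_triplePlusParity, doubleEmbedding_three_mul_eq_tripleMinusParity,
    doubleEmbedding_three_mul_eq_tripleMinusParity, doubleEmbedding_three_mul_eq_triplePlusParity, ?_⟩
  rintro ⟨D, jA, jB, hfA, hhA, hfB, hhB, hcomm⟩
  have h24 : jA 2 < jA 4 := jA.lt_iff_lt.2 (by norm_num)
  have hf : D.f (jB 1) < D.f (jA 1) := by
    rw [← hfA 1, ← hfB 1]
    exact (hcomm 1).symm.trans_lt h24
  have hh : D.h (jA 1) < D.h (jB 1) := by
    rw [← hhA 1, ← hhB 1]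
    exact h24.trans_eq (hcomm 2)
  exact D.monoF.not_lt_and_lt D.monoH (jA 1) (jB 1) ⟨hf, hh⟩
end

section
/- Let F be a set and let C be a linearly ordered set equipped with an F-indexed family of order automorphisms. Then C is a strong amalgamation base for the class of linearly ordered sets with an F-indexed family of strict order preserving unary operations: whenever A and B are linearly ordered sets with F-indexed families of strictly monotone unary operations and i_A : C → A, i_B : C → B are order embeddings commuting with each indexed operation, there exist a linearly ordered set D with an F-indexed family of strictly monotone unary operations and order embeddings j_A : A → D, j_B : B → D commuting with each indexed operation, such that j_A ∘ i_A = j_B ∘ i_B and range(j_A) ∩ range(j_B) = range(j_A ∘ i_A). -/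
/-- A linearly ordered set equipped with an `F`-indexed family of order
automorphisms. -/
structure LinOrderAuts (F : Type) where
  carrier : Type
  [linOrd : LinearOrder carrier]
  f : F → carrier ≃o carrier

attribute [instance] LinOrderAuts.linOrd

/-- A linearly ordered set equipped with an `F`-indexed family of strict order
preserving (strictly monotone) unary operations. -/
structure LinOrderStrictOps (F : Type) where
  carrier : Type
  [linOrd : LinearOrder carrier]
  f : F → carrier → carrier
  smono : ∀ i, StrictMono (f i)

attribute [instance] LinOrderStrictOps.linOrd

/-!
The amalgam of `A` and `B` over `C` is `A` with the points of `B` outside `C` inserted: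
such a `b` lies below `a` exactly when some `c` satisfies `b < c ≤ a`. An operation of `A`
and the matching operation of `B` extend to this amalgam because, `C` being mapped onto
itself by the corresponding automorphism, the witnesses `c` are carried to witnesses and
back, and points of `B` outside `C` stay outside `C`.
-/

section OrderAmalgam

variable {C A B : Type*} [LinearOrder C] [LinearOrder A] [LinearOrder B]

inductive OrderAmalgam (iA : C ↪o A) (iB : C ↪o B)
  | inl : A → OrderAmalgam iA iB
  | inr (b : B) : b ∉ Set.range iB → OrderAmalgam iA iB

namespace OrderAmalgam

variable (iA : C ↪o A) (iB : C ↪o B)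

def Separated (a : A) (b : B) : Prop :=
  ∃ c, b < iB c ∧ iA c ≤ a

variable {iA iB}

lemma Separated.mono_left {a a' : A} {b : B} (h : a ≤ a') (hs : Separated iA iB a b) :
    Separated iA iB a' b :=
  let ⟨c, hb, ha⟩ := hs; ⟨c, hb, ha.trans h⟩

lemma Separated.anti_right {a : A} {b b' : B} (h : b' ≤ b) (hs : Separated iA iB a b) :
    Separated iA iB a b' :=
  let ⟨c, hb, ha⟩ := hs; ⟨c, h.trans_lt hb, ha⟩

lemma lt_of_separated_of_not_separated {a a' : A} {b : B} (hs : Separated iA iB a' b)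
    (hn : ¬ Separated iA iB a b) : a < a' := by
  obtain ⟨c, hb, ha⟩ := hs
  exact (not_le.mp fun h => hn ⟨c, hb, h⟩).trans_le ha

lemma separated_apply_iff {c : C} {b : B} : Separated iA iB (iA c) b ↔ b < iB c :=
  ⟨fun ⟨_, hb, ha⟩ => hb.trans_le (iB.monotone (iA.le_iff_le.mp ha)),
    fun h => ⟨c, h, le_rfl⟩⟩

def le : OrderAmalgam iA iB → OrderAmalgam iA iB → Prop
  | inl a, inl a' => a ≤ a'
  | inl a, inr b _ => ¬ Separated iA iB a b
  | inr b _, inl a => Separated iA iB a b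
  | inr b _, inr b' _ => b ≤ b'

noncomputable instance : LinearOrder (OrderAmalgam iA iB) where
  le := le
  le_refl x := by cases x <;> simp [le]
  le_trans x y z hxy hyz := by
    cases x <;> cases y <;> cases z <;> simp only [le] at *
    · exact hxy.trans hyz
    · exact fun hs => hyz (hs.mono_left hxy)
    · exact (lt_of_separated_of_not_separated hyz hxy).le
    · exact fun hs => hxy (hs.anti_right hyz)
    · exact hxy.mono_left hyz
    · exact le_of_not_gt fun h => hyz (hxy.anti_right h.le)
    · exact hyz.anti_right hxy
    · exact hxy.trans hyz
  le_antisymm x y hxy hyx := by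
    cases x <;> cases y <;> simp only [le] at *
    · exact congrArg _ (le_antisymm hxy hyx)
    · exact absurd hyx hxy
    · exact absurd hxy hyx
    · simp only [inr.injEq]; exact le_antisymm hxy hyx
  le_total x y := by
    cases x <;> cases y <;> simp only [le]
    · exact le_total _ _
    · exact (em _).symm
    · exact em _
    · exact le_total _ _
  toDecidableLE := Classical.decRel _

lemma inl_le_inl_iff {a a' : A} : (inl a : OrderAmalgam iA iB) ≤ inl a' ↔ a ≤ a' := Iff.rfl

lemma inl_le_inr_iff {a : A} {b : B} {hb} :
    (inl a : OrderAmalgam iA iB) ≤ inr b hb ↔ ¬ Separated iA iB a b := Iff.rfl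

lemma inr_le_inl_iff {a : A} {b : B} {hb} :
    (inr b hb : OrderAmalgam iA iB) ≤ inl a ↔ Separated iA iB a b := Iff.rfl

lemma inr_le_inr_iff {b b' : B} {hb hb'} :
    (inr b hb : OrderAmalgam iA iB) ≤ inr b' hb' ↔ b ≤ b' := Iff.rfl

variable (iA iB)

noncomputable def leftEmb : A ↪o OrderAmalgam iA iB :=
  OrderEmbedding.ofMapLEIff inl fun _ _ => Iff.rfl

open Classical in
noncomputable def ofRight (b : B) : OrderAmalgam iA iB :=
  if hb : b ∈ Set.range iB then inl (iA hb.choose) else inr b hb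

variable {iA iB}

lemma ofRight_apply (c : C) : ofRight iA iB (iB c) = inl (iA c) := by
  have hb : iB c ∈ Set.range iB := ⟨c, rfl⟩
  rw [ofRight, dif_pos hb, iB.injective hb.choose_spec]

lemma ofRight_of_not_mem {b : B} (hb : b ∉ Set.range iB) : ofRight iA iB b = inr b hb :=
  dif_neg hb

lemma ofRight_le_ofRight_iff (b b' : B) : ofRight iA iB b ≤ ofRight iA iB b' ↔ b ≤ b' := by
  by_cases hb : b ∈ Set.range iB <;> by_cases hb' : b' ∈ Set.range iB
  · obtain ⟨c, rfl⟩ := hb; obtain ⟨c', rfl⟩ := hb'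
    rw [ofRight_apply, ofRight_apply, inl_le_inl_iff, iA.le_iff_le, iB.le_iff_le]
  · obtain ⟨c, rfl⟩ := hb
    rw [ofRight_apply, ofRight_of_not_mem hb', inl_le_inr_iff, separated_apply_iff, not_lt]
  · obtain ⟨c, rfl⟩ := hb'
    rw [ofRight_apply, ofRight_of_not_mem hb, inr_le_inl_iff, separated_apply_iff]
    exact ⟨le_of_lt, fun h => h.lt_of_ne fun e => hb ⟨c, e.symm⟩⟩
  · rw [ofRight_of_not_mem hb, ofRight_of_not_mem hb', inr_le_inr_iff]

variable (iA iB)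

noncomputable def rightEmb : B ↪o OrderAmalgam iA iB :=
  OrderEmbedding.ofMapLEIff (ofRight iA iB) ofRight_le_ofRight_iff

lemma leftEmb_comp_eq_rightEmb_comp (c : C) : leftEmb iA iB (iA c) = rightEmb iA iB (iB c) :=
  (ofRight_apply c).symm

lemma range_leftEmb_inter_range_rightEmb :
    Set.range (leftEmb iA iB) ∩ Set.range (rightEmb iA iB) =
      Set.range fun c => leftEmb iA iB (iA c) := by
  ext x
  constructor
  · rintro ⟨⟨a, rfl⟩, ⟨b, hb⟩⟩
    by_cases hbC : b ∈ Set.range iB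
    · obtain ⟨c, rfl⟩ := hbC
      exact ⟨c, (leftEmb_comp_eq_rightEmb_comp iA iB c).trans hb⟩
    · exact absurd ((ofRight_of_not_mem hbC).symm.trans hb) nofun
  · rintro ⟨c, rfl⟩
    exact ⟨⟨iA c, rfl⟩, ⟨iB c, (leftEmb_comp_eq_rightEmb_comp iA iB c).symm⟩⟩

section Map

variable {iA iB} {gC : C ≃o C} {gA : A → A} {gB : B → B}

lemma mapsTo_compl_range (hgB : gB.Injective) (hB : ∀ c, iB (gC c) = gB (iB c)) :
    Set.MapsTo gB (Set.range iB)ᶜ (Set.range iB)ᶜ := by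
  rintro b hb ⟨c, hc⟩
  obtain ⟨c', rfl⟩ := gC.surjective c
  exact hb ⟨c', hgB ((hB c').symm.trans hc)⟩

lemma separated_map_iff (hgA : StrictMono gA) (hgB : StrictMono gB)
    (hA : ∀ c, iA (gC c) = gA (iA c)) (hB : ∀ c, iB (gC c) = gB (iB c)) {a : A} {b : B} :
    Separated iA iB (gA a) (gB b) ↔ Separated iA iB a b := by
  constructor
  · rintro ⟨c, hb, ha⟩
    obtain ⟨c, rfl⟩ := gC.surjective c
    rw [hB] at hb; rw [hA] at ha
    exact ⟨c, hgB.lt_iff_lt.mp hb, hgA.le_iff_le.mp ha⟩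
  · rintro ⟨c, hb, ha⟩
    exact ⟨gC c, hB c ▸ hgB hb, hA c ▸ hgA.monotone ha⟩

variable (gA gB)

def map (hgB : Set.MapsTo gB (Set.range iB)ᶜ (Set.range iB)ᶜ) :
    OrderAmalgam iA iB → OrderAmalgam iA iB
  | inl a => inl (gA a)
  | inr b hb => inr (gB b) (hgB hb)

lemma strictMono_map (hgA : StrictMono gA) (hgB : StrictMono gB)
    (hA : ∀ c, iA (gC c) = gA (iA c)) (hB : ∀ c, iB (gC c) = gB (iB c)) :
    StrictMono (map (iA := iA) gA gB (mapsTo_compl_range hgB.injective hB)) := by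
  refine strictMono_of_le_iff_le fun x y => ?_
  cases x <;> cases y
  · exact hgA.le_iff_le.symm
  · exact not_congr (separated_map_iff hgA hgB hA hB).symm
  · exact (separated_map_iff hgA hgB hA hB).symm
  · exact hgB.le_iff_le.symm

lemma map_ofRight (hgB : StrictMono gB) (hA : ∀ c, iA (gC c) = gA (iA c))
    (hB : ∀ c, iB (gC c) = gB (iB c)) (b : B) :
    map gA gB (mapsTo_compl_range hgB.injective hB) (ofRight iA iB b) = ofRight iA iB (gB b) := by
  by_cases hb : b ∈ Set.range iB
  · obtain ⟨c, rfl⟩ := hb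
    rw [← hB, ofRight_apply, ofRight_apply, map, hA]
  · rw [ofRight_of_not_mem hb, ofRight_of_not_mem (mapsTo_compl_range hgB.injective hB hb), map]

end Map

end OrderAmalgam

end OrderAmalgam

open OrderAmalgam in
/-- A linearly ordered set with an `F`-indexed family of order automorphisms is a
strong amalgamation base for the class of linearly ordered sets with an
`F`-indexed family of strict order preserving unary operations. -/
theorem automorphisms_strong_amalgamation_base (F : Type)
    (C : LinOrderAuts F) (A B : LinOrderStrictOps F)
    (iA : C.carrier ↪o A.carrier) (iB : C.carrier ↪o B.carrier)
    (hA : ∀ i c, iA (C.f i c) = A.f i (iA c))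
    (hB : ∀ i c, iB (C.f i c) = B.f i (iB c)) :
    ∃ (D : LinOrderStrictOps F) (jA : A.carrier ↪o D.carrier)
      (jB : B.carrier ↪o D.carrier),
      (∀ i a, jA (A.f i a) = D.f i (jA a)) ∧
      (∀ i b, jB (B.f i b) = D.f i (jB b)) ∧
      (∀ c, jA (iA c) = jB (iB c)) ∧
      Set.range jA ∩ Set.range jB = Set.range (fun c => jA (iA c)) := by
  let D : LinOrderStrictOps F :=
    { carrier := OrderAmalgam iA iB
      f := fun i => map (A.f i) (B.f i) (mapsTo_compl_range (B.smono i).injective (hB i))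
      smono := fun i => strictMono_map _ _ (A.smono i) (B.smono i) (hA i) (hB i) }
  exact ⟨D, leftEmb iA iB, rightEmb iA iB, fun _ _ => rfl,
    fun i b => (map_ofRight _ _ (B.smono i) (hA i) (hB i) b).symm,
    leftEmb_comp_eq_rightEmb_comp iA iB, range_leftEmb_inter_range_rightEmb iA iB⟩
end

section
/- Let C be a linearly ordered set and let g : C → C be order reversing (antitone) with no fixed point. Then C can be extended by adding exactly one element to a linearly ordered set with an order reversing operation having a center: there exist a linearly ordered set D, an order reversing operation g_D : D → D, an order embedding e : C → D with e ∘ g = g_D ∘ e, and an element c ∈ D with g_D(c) = c, such that D = range(e) ∪ {c}. If moreover g is strict order reversing on C, then g_D can be taken strict order reversing on D. -/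
/-!
The points `a` with `g a < a` form an upper set of `C` whose complement is `{a | a < g a}`, since
`g` has no fixed point, and the antitone `g` exchanges the two parts. Inserting one new point `c`
into this cut gives a linear order on which `g`, extended by `g c = c`, is still (strictly)
antitone.
-/

/-- A bundled linearly ordered set. -/
structure BundledLinearOrder where
  carrier : Type
  [ord : LinearOrder carrier]

attribute [instance] BundledLinearOrder.ord

def WithCut {C : Type*} (_p : C → Prop) : Type _ := Option C

namespace WithCut

variable {C : Type*} {p : C → Prop}

def of (a : C) : WithCut p := some a

def cut : WithCut p := none

@[elab_as_elim, induction_eliminator]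
def recCutOf {motive : WithCut p → Sort*} (cut : motive cut) (of : ∀ a, motive (of a)) :
    ∀ x, motive x
  | none => cut
  | some a => of a

theorem of_ne_cut (a : C) : (of a : WithCut p) ≠ cut := Option.some_ne_none a

theorem cut_notMem_range_of : (cut : WithCut p) ∉ Set.range of := by
  rintro ⟨a, ha⟩
  exact of_ne_cut a ha

theorem range_of_union_cut : Set.range (of : C → WithCut p) ∪ {cut} = Set.univ := by
  refine Set.eq_univ_of_forall fun x => ?_
  induction x with
  | cut => exact Or.inr rfl
  | of a => exact Or.inl ⟨a, rfl⟩

def map (f : C → C) : WithCut p → WithCut p := Option.map f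

@[simp] theorem map_of (f : C → C) (a : C) : map f (of a : WithCut p) = of (f a) := rfl

@[simp] theorem map_cut (f : C → C) : map f (cut : WithCut p) = cut := rfl

variable [DecidablePred p]

/-- Points are ordered first by their side of the cut (`true` for `cut` and for `a` with `p a`),
then in `WithBot C`, so that `cut` lies just below `{a | p a}`. -/
def side : WithCut p → Bool
  | none => true
  | some a => decide (p a)

def key (x : WithCut p) : Bool ×ₗ WithBot C := toLex (side x, x)

@[simp] theorem key_of (a : C) : key (of a : WithCut p) = toLex (decide (p a), ↑a) := rfl

@[simp] theorem key_cut : key (cut : WithCut p) = toLex (true, ⊥) := rfl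

theorem key_injective : Function.Injective (key (p := p)) :=
  fun _ _ h => congrArg (fun k => (ofLex k).2) h

variable [LinearOrder C]

instance : LinearOrder (WithCut p) := LinearOrder.lift' key key_injective

theorem lt_iff_key_lt {x y : WithCut p} : x < y ↔ key x < key y := Iff.rfl

@[simp]
theorem cut_lt_of {a : C} : (cut : WithCut p) < of a ↔ p a := by
  simp [lt_iff_key_lt, Prod.Lex.toLex_lt_toLex, Bool.lt_iff]

@[simp]
theorem of_lt_cut {a : C} : (of a : WithCut p) < cut ↔ ¬ p a := by
  simp [lt_iff_key_lt, Prod.Lex.toLex_lt_toLex, Bool.lt_iff]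

@[simp]
theorem cut_le_of {a : C} : (cut : WithCut p) ≤ of a ↔ p a := by
  rw [(of_ne_cut a).symm.le_iff_lt, cut_lt_of]

@[simp]
theorem of_le_cut {a : C} : (of a : WithCut p) ≤ cut ↔ ¬ p a := by
  rw [(of_ne_cut a).le_iff_lt, of_lt_cut]

theorem strictMono_of (hp : Monotone p) : StrictMono (of : C → WithCut p) := by
  intro a b hab
  have hpab : p a → p b := hp hab.le
  simp only [lt_iff_key_lt, key_of, Prod.Lex.toLex_lt_toLex, Bool.lt_iff, WithBot.coe_lt_coe,
    decide_eq_true_eq, decide_eq_false_iff_not, decide_eq_decide]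
  tauto

def embedding (hp : Monotone p) : C ↪o WithCut p :=
  OrderEmbedding.ofStrictMono of (strictMono_of hp)

section map

variable {f : C → C}

theorem antitone_map (hp : Monotone p) (hf : Antitone f) (hswap : ∀ a, p (f a) ↔ ¬ p a) :
    Antitone (map f : WithCut p → WithCut p) := by
  intro x y hxy
  induction x with
  | cut => induction y with
    | cut => exact le_rfl
    | of b => simpa [hswap] using hxy
  | of a => induction y with
    | cut => simpa [hswap] using hxy
    | of b => simpa [(strictMono_of hp).le_iff_le] using hf ((strictMono_of hp).le_iff_le.1 hxy)

theorem strictAnti_map (hp : Monotone p) (hf : StrictAnti f) (hswap : ∀ a, p (f a) ↔ ¬ p a) :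
    StrictAnti (map f : WithCut p → WithCut p) := by
  intro x y hxy
  induction x with
  | cut => induction y with
    | cut => exact absurd hxy (lt_irrefl _)
    | of b => simpa [hswap] using hxy
  | of a => induction y with
    | cut => simpa [hswap] using hxy
    | of b => simpa [(strictMono_of hp).lt_iff_lt] using hf ((strictMono_of hp).lt_iff_lt.1 hxy)

end map

end WithCut

namespace Antitone

variable {C : Type*} [LinearOrder C] {g : C → C}

theorem monotone_apply_lt_self (hg : Antitone g) : Monotone fun a => g a < a :=
  fun _ _ hab h => (hg hab).trans_lt (h.trans_le hab)

theorem apply_apply_lt_apply_iff (hg : Antitone g) (hnc : ∀ c, g c ≠ c) (a : C) :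
    g (g a) < g a ↔ ¬ g a < a := by
  refine ⟨fun h h' => (hg h'.le).not_gt h, fun h => ?_⟩
  exact (hg (not_lt.1 h)).lt_of_ne (hnc (g a))

end Antitone

/-- A linearly ordered set with an order reversing operation and no fixed point
can be extended, by adding exactly one element, to a linearly ordered set with
an order reversing operation having a center; if the original operation is
strict order reversing, the extended operation can be taken strict order
reversing as well. -/
theorem antitone_no_center_one_point_extension
    {C : Type} [LinearOrder C] (g : C → C) (hg : Antitone g)
    (hnc : ∀ c, g c ≠ c) :
    ∃ (D : BundledLinearOrder) (gD : D.carrier → D.carrier)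
      (e : C ↪o D.carrier) (c : D.carrier),
      Antitone gD ∧
      (∀ x, e (g x) = gD (e x)) ∧
      gD c = c ∧
      c ∉ Set.range e ∧
      Set.range e ∪ {c} = Set.univ ∧
      (StrictAnti g → StrictAnti gD) := by
  have hp : Monotone fun a => g a < a := hg.monotone_apply_lt_self
  have hswap : ∀ a, g (g a) < g a ↔ ¬ g a < a := hg.apply_apply_lt_apply_iff hnc
  exact ⟨⟨WithCut fun a => g a < a⟩, WithCut.map g, WithCut.embedding hp,
    (WithCut.cut : WithCut fun a => g a < a), WithCut.antitone_map hp hg hswap, fun _ => rfl,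
    rfl, WithCut.cut_notMem_range_of, WithCut.range_of_union_cut,
    fun hs => WithCut.strictAnti_map hp hs hswap⟩
end

section
/- The class of linearly ordered sets equipped with one order reversing (antitone) unary operation has the amalgamation property: whenever A, B, C are linearly ordered sets with antitone unary operations g_A, g_B, g_C and i_A : C → A, i_B : C → B are order embeddings satisfying i_A ∘ g_C = g_A ∘ i_A and i_B ∘ g_C = g_B ∘ i_B, there exist a linearly ordered set D with an antitone unary operation g_D and order embeddings j_A : A → D, j_B : B → D commuting with the operations, such that j_A ∘ i_A = j_B ∘ i_B. -/
structure LinOrderAnti where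
  carrier : Type
  [linOrd : LinearOrder carrier]
  g : carrier → carrier
  anti : Antitone g

attribute [instance] LinOrderAnti.linOrd

/-!
The amalgam is a quotient of the disjoint union `A ⊕ B`, the operation acting summandwise.
Whether `x < g x`, `x = g x` or `g x < x` is preserved by embeddings and is monotone in `x`,
so two elements of different summands are forced into an order when an element of `C` lies
between them, when they differ in this respect, or when such a comparison holds between their
images under `g` in the opposite direction. Weak forced comparisons propagate forward along `g`,
so forced comparisons never conflict. The unforced pairs lie on the same side of their images;
they are put `A` first below their images and `B` first above them, which keeps `g` antitone,
and are identified when they are images of the same element of `C` or both fixed.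
-/

open Function

section CmpImage

variable {α β : Type*} [PartialOrder α] [PartialOrder β] {f : α → α} {x y : α}

open Classical in
/-- `0`, `1` or `2` according as `x < f x`, neither, or `f x < x`. -/
noncomputable def cmpImage (f : α → α) (x : α) : ℕ :=
  if x < f x then 0 else if f x < x then 2 else 1

theorem cmpImage_le_two : cmpImage f x ≤ 2 := by
  unfold cmpImage; split_ifs <;> omega

theorem cmpImage_eq_zero_iff : cmpImage f x = 0 ↔ x < f x := by
  unfold cmpImage; split_ifs <;> simp_all

theorem cmpImage_eq_two_iff : cmpImage f x = 2 ↔ f x < x := by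
  unfold cmpImage
  split_ifs with h₁ h₂
  · simp [h₁.not_gt]
  · simp [h₂]
  · simp [h₂]

theorem cmpImage_eq_one_iff (hx : x ≤ f x ∨ f x ≤ x) :
    cmpImage f x = 1 ↔ IsFixedPt f x := by
  unfold cmpImage IsFixedPt
  split_ifs with h₁ h₂
  · simp [h₁.ne']
  · simp [h₂.ne]
  · simp only [true_iff]
    rcases hx with hx | hx
    · exact (hx.lt_or_eq.resolve_left h₁).symm
    · exact hx.lt_or_eq.resolve_left h₂

theorem cmpImage_map (e : α ↪o β) {g : β → β} (h : ∀ x, e (f x) = g (e x)) (x : α) :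
    cmpImage g (e x) = cmpImage f x := by
  classical
  simp only [cmpImage, ← h, e.lt_iff_lt]

theorem cmpImage_mono (hf : Antitone f) : Monotone (cmpImage f) := by
  intro x y hxy
  by_cases h₀ : x < f x
  · simp [cmpImage_eq_zero_iff.mpr h₀]
  by_cases h₂ : f x < x
  · rw [cmpImage_eq_two_iff.mpr h₂,
      cmpImage_eq_two_iff.mpr ((hf hxy).trans_lt (h₂.trans_le hxy))]
  · have hy : ¬ y < f y := fun hy => h₀ (hxy.trans_lt (hy.trans_le (hf hxy)))
    have hx : cmpImage f x = 1 := by simp [cmpImage, h₀, h₂]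
    have := mt cmpImage_eq_zero_iff.mp hy
    omega

section Antitone

variable (hf : Antitone f) (hc : ∀ z, z ≤ f z ∨ f z ≤ z)
include hf hc

theorem one_le_cmpImage_apply (h : cmpImage f x ≤ 1) : 1 ≤ cmpImage f (f x) := by
  have hx : x ≤ f x := by
    rcases Nat.le_one_iff_eq_zero_or_eq_one.mp h with h | h
    · exact (cmpImage_eq_zero_iff.mp h).le
    · exact ((cmpImage_eq_one_iff (hc x)).mp h).ge
  have := mt cmpImage_eq_zero_iff.mp (hf hx).not_gt
  omega

theorem cmpImage_apply_le_one (h : 1 ≤ cmpImage f x) : cmpImage f (f x) ≤ 1 := by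
  have hx : f x ≤ x := by
    by_cases h₁ : cmpImage f x = 1
    · exact ((cmpImage_eq_one_iff (hc x)).mp h₁).le
    · exact (cmpImage_eq_two_iff.mp (by have := cmpImage_le_two (f := f) (x := x); omega)).le
  have := mt cmpImage_eq_two_iff.mp (hf hx).not_gt
  have := cmpImage_le_two (f := f) (x := f x)
  omega

theorem cmpImage_apply_lt_or_isFixedPt (h : cmpImage f x < cmpImage f y) :
    cmpImage f (f y) < cmpImage f (f x) ∨ IsFixedPt f (f x) ∧ IsFixedPt f (f y) := by
  have := cmpImage_le_two (f := f) (x := y)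
  have h₁ := one_le_cmpImage_apply hf hc (x := x) (by omega)
  have h₂ := cmpImage_apply_le_one hf hc (x := y) (by omega)
  rcases (h₂.trans h₁).lt_or_eq with h | h
  · exact Or.inl h
  · exact Or.inr ⟨(cmpImage_eq_one_iff (hc _)).mp (by omega),
      (cmpImage_eq_one_iff (hc _)).mp (by omega)⟩

end Antitone

theorem Function.IsFixedPt.eq_of_le (hf : Antitone f) (hx : IsFixedPt f x) (hy : IsFixedPt f y)
    (h : x ≤ y) : x = y :=
  h.antisymm (hy.eq ▸ hx.eq ▸ hf h)

end CmpImage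

namespace Sum

variable {α β : Type*}

theorem isLeft_eq_of_le [LE α] [LE β] {u v : α ⊕ β} (h : u ≤ v) : u.isLeft = v.isLeft := by
  cases u <;> cases v <;> simp_all

variable [LinearOrder α] [LinearOrder β] {u v : α ⊕ β}

theorem le_total_of_isLeft_eq (h : u.isLeft = v.isLeft) : u ≤ v ∨ v ≤ u := by
  cases u <;> cases v <;> simp_all [le_total]

theorem lt_or_ge_of_isLeft_eq (h : u.isLeft = v.isLeft) : u < v ∨ v ≤ u := by
  rcases le_total_of_isLeft_eq h with h | h
  · exact h.lt_or_eq.imp_right ge_of_eq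
  · exact Or.inr h

end Sum

theorem Antitone.sumMap {α β γ δ : Type*} [Preorder α] [Preorder β] [Preorder γ]
    [Preorder δ] {f : α → γ} {g : β → δ} (hf : Antitone f) (hg : Antitone g) :
    Antitone (Sum.map f g) := by
  rintro (a | b) (a' | b') h <;> simp_all
  exacts [hf h, hg h]

namespace LinOrderAnti

structure Span where
  A : LinOrderAnti
  B : LinOrderAnti
  C : LinOrderAnti
  iA : C.carrier ↪o A.carrier
  iB : C.carrier ↪o B.carrier
  hA : ∀ c, iA (C.g c) = A.g (iA c)
  hB : ∀ c, iB (C.g c) = B.g (iB c)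

namespace Span

variable (S : Span)

/-- Ordered only within each summand. -/
abbrev U : Type := S.A.carrier ⊕ S.B.carrier

def G : S.U → S.U := Sum.map S.A.g S.B.g

def cAt : S.U → S.C.carrier ↪o S.U
  | .inl _ => S.iA.trans (OrderEmbedding.ofMapLEIff Sum.inl fun _ _ => Sum.inl_le_inl_iff)
  | .inr _ => S.iB.trans (OrderEmbedding.ofMapLEIff Sum.inr fun _ _ => Sum.inr_le_inr_iff)

open Sum

variable {S} {u v x y z u' v' : S.U}

theorem isLeft_G (u : S.U) : (S.G u).isLeft = u.isLeft := by
  cases u <;> rfl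

theorem G_antitone : Antitone S.G :=
  S.A.anti.sumMap S.B.anti

theorem le_total_G (u : S.U) : u ≤ S.G u ∨ S.G u ≤ u :=
  le_total_of_isLeft_eq (isLeft_G u).symm

theorem lt_of_G_lt_G (h : S.G u < S.G v) : v < u := by
  cases u <;> cases v <;> simp_all [G]
  · exact S.A.anti.reflect_lt h
  · exact S.B.anti.reflect_lt h

theorem cAt_congr (h : u.isLeft = v.isLeft) : S.cAt u = S.cAt v := by
  cases u <;> cases v <;> simp_all <;> rfl

theorem cAt_G (u : S.U) : S.cAt (S.G u) = S.cAt u :=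
  cAt_congr (isLeft_G u)

theorem G_cAt (u : S.U) (c : S.C.carrier) : S.G (S.cAt u c) = S.cAt u (S.C.g c) := by
  cases u <;> simp [cAt, G, S.hA, S.hB]

theorem cmpImage_cAt (u : S.U) (c : S.C.carrier) :
    cmpImage S.G (S.cAt u c) = cmpImage S.C.g c :=
  cmpImage_map (S.cAt u) (fun c => (G_cAt u c).symm) c

theorem isFixedPt_eq (hv : IsFixedPt S.G v) (hv' : IsFixedPt S.G v')
    (h : v.isLeft = v'.isLeft) : v = v' := by
  rcases le_total_of_isLeft_eq h with h | h
  · exact hv.eq_of_le G_antitone hv' h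
  · exact (hv'.eq_of_le G_antitone hv h).symm

variable (S) in
def LEViaC (u v : S.U) : Prop :=
  ∃ c, u ≤ S.cAt u c ∧ S.cAt v c ≤ v

variable (S) in
def LTViaC (u v : S.U) : Prop :=
  ∃ c, u ≤ S.cAt u c ∧ S.cAt v c ≤ v ∧ (u < S.cAt u c ∨ S.cAt v c < v)

variable (S) in
def EqViaC (u v : S.U) : Prop :=
  ∃ c, u = S.cAt u c ∧ v = S.cAt v c

theorem LTViaC.leViaC (h : S.LTViaC u v) : S.LEViaC u v :=
  let ⟨c, hu, hv, _⟩ := h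
  ⟨c, hu, hv⟩

theorem EqViaC.leViaC (h : S.EqViaC u v) : S.LEViaC u v :=
  let ⟨c, hu, hv⟩ := h
  ⟨c, hu.le, hv.ge⟩

theorem EqViaC.symm (h : S.EqViaC u v) : S.EqViaC v u :=
  let ⟨c, hu, hv⟩ := h
  ⟨c, hv, hu⟩

theorem LEViaC.ltViaC_or_eqViaC (h : S.LEViaC u v) : S.LTViaC u v ∨ S.EqViaC u v := by
  obtain ⟨c, hu, hv⟩ := h
  rcases hu.lt_or_eq with hu' | hu'
  · exact Or.inl ⟨c, hu, hv, Or.inl hu'⟩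
  rcases hv.lt_or_eq with hv' | hv'
  · exact Or.inl ⟨c, hu, hv, Or.inr hv'⟩
  · exact Or.inr ⟨c, hu', hv'.symm⟩

theorem LEViaC.not_ltViaC (h : S.LEViaC u v) : ¬ S.LTViaC v u := by
  rintro ⟨c', hvc', hc'u, hs⟩
  obtain ⟨c, huc, hcv⟩ := h
  obtain rfl : c = c' :=
    le_antisymm ((S.cAt v).le_iff_le.mp (hcv.trans hvc')) ((S.cAt u).le_iff_le.mp (hc'u.trans huc))
  rcases hs with hs | hs
  · exact hs.not_ge hcv
  · exact hs.not_ge huc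

theorem LEViaC.cmpImage_le (h : S.LEViaC u v) : cmpImage S.G u ≤ cmpImage S.G v := by
  obtain ⟨c, huc, hcv⟩ := h
  calc cmpImage S.G u ≤ cmpImage S.G (S.cAt u c) := cmpImage_mono G_antitone huc
    _ = cmpImage S.G (S.cAt v c) := by rw [cmpImage_cAt, cmpImage_cAt]
    _ ≤ cmpImage S.G v := cmpImage_mono G_antitone hcv

theorem LEViaC.G (h : S.LEViaC u v) : S.LEViaC (S.G v) (S.G u) := by
  obtain ⟨c, huc, hcv⟩ := h
  refine ⟨S.C.g c, ?_, ?_⟩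
  · rw [cAt_G, ← G_cAt]; exact G_antitone hcv
  · rw [cAt_G, ← G_cAt]; exact G_antitone huc

theorem EqViaC.G (h : S.EqViaC u v) : S.EqViaC (S.G u) (S.G v) := by
  obtain ⟨c, hu, hv⟩ := h
  refine ⟨S.C.g c, ?_, ?_⟩
  · rw [cAt_G, ← G_cAt, ← hu]
  · rw [cAt_G, ← G_cAt, ← hv]

theorem LTViaC.mono (h : S.LTViaC u v) (hu : u' ≤ u) (hv : v ≤ v') : S.LTViaC u' v' := by
  obtain ⟨c, huc, hcv, hs⟩ := h
  rw [← cAt_congr (isLeft_eq_of_le hu)] at huc hs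
  rw [cAt_congr (isLeft_eq_of_le hv)] at hcv hs
  exact ⟨c, hu.trans huc, hcv.trans hv, hs.imp hu.trans_lt fun h => h.trans_le hv⟩

theorem EqViaC.isFixedPt (h : S.EqViaC u v) (hu : IsFixedPt S.G u) : IsFixedPt S.G v := by
  obtain ⟨c, hu', hv'⟩ := h
  have hc : S.C.g c = c := (S.cAt u).injective (by rw [← G_cAt, ← hu', hu.eq])
  show S.G v = v
  rw [hv', G_cAt, hc]

theorem EqViaC.eq (h : S.EqViaC u v) (h' : S.EqViaC u v') (hvv' : v.isLeft = v'.isLeft) :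
    v = v' := by
  obtain ⟨c, hu, hv⟩ := h
  obtain ⟨c', hu', hv'⟩ := h'
  obtain rfl : c = c' := (S.cAt u).injective (hu.symm.trans hu')
  rw [hv, hv', cAt_congr hvv']

variable (S) in
/-- `cmpImage` is preserved by embeddings and monotone, so a smaller value forces a smaller
element. -/
def DirectLT (u v : S.U) : Prop :=
  S.LTViaC u v ∨ cmpImage S.G u < cmpImage S.G v

variable (S) in
def DirectEq (u v : S.U) : Prop :=
  S.EqViaC u v ∨ IsFixedPt S.G u ∧ IsFixedPt S.G v

variable (S) in
def DirectLE (u v : S.U) : Prop :=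
  S.LEViaC u v ∨ cmpImage S.G u < cmpImage S.G v ∨ IsFixedPt S.G u ∧ IsFixedPt S.G v

theorem DirectLT.directLE (h : S.DirectLT u v) : S.DirectLE u v := by
  rcases h with h | h
  exacts [.inl h.leViaC, .inr (.inl h)]

theorem DirectLE.directLT_or_directEq (h : S.DirectLE u v) : S.DirectLT u v ∨ S.DirectEq u v := by
  rcases h with h | h | h
  · exact h.ltViaC_or_eqViaC.imp Or.inl Or.inl
  · exact Or.inl (Or.inr h)
  · exact Or.inr (Or.inr h)

theorem DirectLE.G (h : S.DirectLE u v) : S.DirectLE (S.G v) (S.G u) := by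
  rcases h with h | h | ⟨hu, hv⟩
  · exact Or.inl h.G
  · rcases cmpImage_apply_lt_or_isFixedPt G_antitone le_total_G h with h | ⟨hu, hv⟩
    · exact Or.inr (Or.inl h)
    · exact Or.inr (Or.inr ⟨hv, hu⟩)
  · exact Or.inr (Or.inr ⟨hv.apply, hu.apply⟩)

theorem DirectLE.not_directLT (h : S.DirectLE u v) : ¬ S.DirectLT v u := by
  have hone {w : S.U} (hw : IsFixedPt S.G w) : cmpImage S.G w = 1 :=
    (cmpImage_eq_one_iff (le_total_G w)).mpr hw
  rintro (h' | h')
  · rcases h with h | h | ⟨hu, hv⟩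
    · exact h.not_ltViaC h'
    · exact h.not_ge h'.leViaC.cmpImage_le
    · have := h'.leViaC.G
      rw [hu.eq, hv.eq] at this
      exact this.not_ltViaC h'
  · rcases h with h | h | ⟨hu, hv⟩
    · exact h'.not_ge h.cmpImage_le
    · exact h.not_gt h'
    · rw [hone hu, hone hv] at h'
      exact h'.false

theorem DirectLT.mono (h : S.DirectLT u v) (hu : u' ≤ u) (hv : v ≤ v') : S.DirectLT u' v' :=
  h.imp (·.mono hu hv) fun h =>
    (cmpImage_mono G_antitone hu).trans_lt (h.trans_le (cmpImage_mono G_antitone hv))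

variable (S) in
inductive ForcedLT : S.U → S.U → Prop
  | direct {u v : S.U} : S.DirectLT u v → ForcedLT u v
  | of_G {u v : S.U} : ForcedLT (S.G u) (S.G v) → ForcedLT v u

theorem ForcedLT.not_directLE (h : S.ForcedLT u v) : ¬ S.DirectLE v u := by
  induction h with
  | direct h => exact fun h' => h'.not_directLT h
  | of_G _ ih => exact fun h' => ih h'.G

theorem ForcedLT.asymm (h : S.ForcedLT u v) : ¬ S.ForcedLT v u := by
  induction h with
  | direct h => exact fun h' => h'.not_directLE h.directLE
  | of_G h ih =>
    intro h'
    cases h' with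
    | direct h' => exact (ForcedLT.of_G h).not_directLE h'.directLE
    | of_G h' => exact ih h'

theorem ForcedLT.mono (h : S.ForcedLT u v) (hu : u' ≤ u) (hv : v ≤ v') : S.ForcedLT u' v' := by
  induction h generalizing u' v' with
  | direct h => exact .direct (h.mono hu hv)
  | of_G _ ih => exact .of_G (ih (G_antitone hv) (G_antitone hu))

theorem cmpImage_eq_of_not_forcedLT (h₁ : ¬ S.ForcedLT u v) (h₂ : ¬ S.ForcedLT v u) :
    cmpImage S.G u = cmpImage S.G v := by
  by_contra hne
  rcases Nat.lt_or_gt_of_ne hne with h | h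
  · exact h₁ (.direct (Or.inr h))
  · exact h₂ (.direct (Or.inr h))

variable (S) in
/-- Unforced pairs lie on the same side of their images; putting `A` first below the images and
`B` first above them is what makes the operation antitone. -/
def Tie (u v : S.U) : Prop :=
  ¬ S.ForcedLT u v ∧ ¬ S.ForcedLT v u ∧ ¬ S.EqViaC u v ∧
    cmpImage S.G u = if u.isLeft then 0 else 2

variable (S) in
def CrossLT (u v : S.U) : Prop :=
  S.ForcedLT u v ∨ S.Tie u v

variable (S) in
def AmalgLT (u v : S.U) : Prop :=
  u < v ∨ u.isLeft ≠ v.isLeft ∧ S.CrossLT u v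

theorem CrossLT.asymm (hs : u.isLeft ≠ v.isLeft) (h : S.CrossLT u v) : ¬ S.CrossLT v u := by
  rintro (h' | ⟨-, h'₂, -, ht'⟩)
  · rcases h with h | ⟨-, h, -⟩
    · exact h.asymm h'
    · exact h h'
  rcases h with h | ⟨h₁, h₂, -, ht⟩
  · exact h'₂ h
  · have := cmpImage_eq_of_not_forcedLT h₁ h₂
    cases hu : u.isLeft <;> cases hv : v.isLeft <;> simp_all

theorem CrossLT.mono_left (hu : u' ≤ u) (h : S.CrossLT u v) : S.CrossLT u' v := by
  rcases h with h | ⟨hf₁, hf₂, he, ht⟩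
  · exact .inl (h.mono hu le_rfl)
  by_cases h₁ : S.ForcedLT u' v
  · exact .inl h₁
  have h₂ : ¬ S.ForcedLT v u' := fun h => hf₂ (h.mono le_rfl hu)
  refine .inr ⟨h₁, h₂, ?_, ?_⟩
  · rintro ⟨c, hcu, hcv⟩
    have hvu : S.LEViaC v u :=
      ⟨c, hcv.le, by rw [← cAt_congr (isLeft_eq_of_le hu), ← hcu]; exact hu⟩
    rcases hvu.ltViaC_or_eqViaC with h | h
    · exact hf₂ (.direct (.inl h))
    · exact he h.symm
  · rw [isLeft_eq_of_le hu, cmpImage_eq_of_not_forcedLT h₁ h₂, ← ht,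
      cmpImage_eq_of_not_forcedLT hf₁ hf₂]

theorem CrossLT.mono_right (hv : v ≤ v') (h : S.CrossLT u v) : S.CrossLT u v' := by
  rcases h with h | ⟨hf₁, hf₂, he, ht⟩
  · exact .inl (h.mono le_rfl hv)
  by_cases h₁ : S.ForcedLT u v'
  · exact .inl h₁
  have h₂ : ¬ S.ForcedLT v' u := fun h => hf₂ (h.mono hv le_rfl)
  refine .inr ⟨h₁, h₂, ?_, ht⟩
  rintro ⟨c, hcu, hcv⟩
  have hvu : S.LEViaC v u :=
    ⟨c, by rw [cAt_congr (isLeft_eq_of_le hv), ← hcv]; exact hv, hcu.ge⟩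
  rcases hvu.ltViaC_or_eqViaC with h | h
  · exact hf₂ (.direct (.inl h))
  · exact he h.symm

theorem CrossLT.of_G (hs : x.isLeft ≠ y.isLeft) (h : S.CrossLT (S.G x) (S.G y)) :
    S.CrossLT y x := by
  rcases h with h | ⟨hf₁, hf₂, he, ht⟩
  · exact .inl (.of_G h)
  by_cases hyx : S.ForcedLT y x
  · exact .inl hyx
  have hxy : ¬ S.ForcedLT x y := by
    intro hxy
    cases hxy with
    | of_G h => exact hf₂ h
    | direct h =>
      rcases h.directLE.G.directLT_or_directEq with h | h | ⟨-, h⟩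
      · exact hf₂ (.direct h)
      · exact he h.symm
      · rw [(cmpImage_eq_one_iff (le_total_G _)).mpr h] at ht
        split at ht <;> omega
  refine .inr ⟨hyx, hxy, fun he' => he he'.symm.G, ?_⟩
  have hτ := cmpImage_eq_of_not_forcedLT hxy hyx
  have := cmpImage_le_two (f := S.G) (x := y)
  have h₁ := one_le_cmpImage_apply G_antitone le_total_G (x := x)
  have h₂ := cmpImage_apply_le_one G_antitone le_total_G (x := x)
  rw [isLeft_G] at ht
  cases hx : x.isLeft <;> cases hy : y.isLeft <;> simp_all
  omega

theorem AmalgLT.irrefl (u : S.U) : ¬ S.AmalgLT u u := by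
  rintro (h | ⟨h, -⟩)
  · exact lt_irrefl u h
  · exact h rfl

theorem AmalgLT.asymm (h : S.AmalgLT u v) : ¬ S.AmalgLT v u := by
  rintro (h' | ⟨hs', h'⟩)
  · rcases h with h | ⟨hs, -⟩
    · exact h.asymm h'
    · exact hs (isLeft_eq_of_le h'.le).symm
  · rcases h with h | ⟨hs, h⟩
    · exact hs' (isLeft_eq_of_le h.le).symm
    · exact h.asymm hs h'

theorem AmalgLT.of_G (h : S.AmalgLT (S.G x) (S.G y)) : S.AmalgLT y x := by
  rcases h with h | ⟨hs, h⟩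
  · exact .inl (lt_of_G_lt_G h)
  · rw [isLeft_G, isLeft_G] at hs
    exact .inr ⟨hs.symm, h.of_G hs⟩

theorem directEq_of_not_crossLT (hs : u.isLeft ≠ v.isLeft) (h₁ : ¬ S.CrossLT u v)
    (h₂ : ¬ S.CrossLT v u) : S.DirectEq u v := by
  have hf₁ : ¬ S.ForcedLT u v := fun h => h₁ (.inl h)
  have hf₂ : ¬ S.ForcedLT v u := fun h => h₂ (.inl h)
  by_cases he : S.EqViaC u v
  · exact .inl he
  have ht₁ : cmpImage S.G u ≠ if u.isLeft then 0 else 2 :=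
    fun h => h₁ (.inr ⟨hf₁, hf₂, he, h⟩)
  have ht₂ : cmpImage S.G v ≠ if v.isLeft then 0 else 2 :=
    fun h => h₂ (.inr ⟨hf₂, hf₁, fun h => he h.symm, h⟩)
  have hτ := cmpImage_eq_of_not_forcedLT hf₁ hf₂
  have := cmpImage_le_two (f := S.G) (x := u)
  have hu : cmpImage S.G u = 1 := by
    cases hu : u.isLeft <;> cases hv : v.isLeft <;> simp_all <;> omega
  exact .inr ⟨(cmpImage_eq_one_iff (le_total_G u)).mp hu,
    (cmpImage_eq_one_iff (le_total_G v)).mp (hτ ▸ hu)⟩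

theorem DirectEq.eq (h : S.DirectEq u v) (h' : S.DirectEq u v') (hvv' : v.isLeft = v'.isLeft) :
    v = v' := by
  rcases h with h | ⟨hu, hv⟩ <;> rcases h' with h' | ⟨hu', hv'⟩
  · exact h.eq h' hvv'
  · exact isFixedPt_eq (h.isFixedPt hu') hv' hvv'
  · exact isFixedPt_eq hv (h'.isFixedPt hu) hvv'
  · exact isFixedPt_eq hv hv' hvv'

theorem AmalgLT.cotrans (h : S.AmalgLT z x) (y : S.U) : S.AmalgLT z y ∨ S.AmalgLT y x := by
  rcases h with hzx | ⟨hs, hzx⟩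
  · have hzx' := isLeft_eq_of_le hzx.le
    by_cases hzy : z.isLeft = y.isLeft
    · exact (lt_or_ge_of_isLeft_eq hzy).imp .inl fun hyz => .inl (hyz.trans_lt hzx)
    have hyx : y.isLeft ≠ x.isLeft := hzx' ▸ Ne.symm hzy
    by_contra! hno
    have h₁ : ¬ S.CrossLT z y := fun h => hno.1 (.inr ⟨hzy, h⟩)
    have h₂ : ¬ S.CrossLT y x := fun h => hno.2 (.inr ⟨hyx, h⟩)
    have hyz : S.DirectEq y z :=
      directEq_of_not_crossLT (Ne.symm hzy) (fun h => h₂ (h.mono_right hzx.le)) h₁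
    have hyx' : S.DirectEq y x :=
      directEq_of_not_crossLT hyx h₂ (fun h => h₁ (h.mono_left hzx.le))
    exact hzx.ne (hyz.eq hyx' hzx')
  · by_cases hzy : z.isLeft = y.isLeft
    · exact (lt_or_ge_of_isLeft_eq hzy).imp .inl fun hyz =>
        .inr ⟨hzy ▸ hs, hzx.mono_left hyz⟩
    have hyx : y.isLeft = x.isLeft := by
      revert hs hzy; cases z.isLeft <;> cases y.isLeft <;> cases x.isLeft <;> simp
    exact (lt_or_ge_of_isLeft_eq hyx).symm.imp (fun hxy => .inr ⟨hzy, hzx.mono_right hxy⟩) .inl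

variable (S) in
def PreAmalgam : Type := S.U

instance : Preorder S.PreAmalgam where
  le u v := ¬ S.AmalgLT v u
  lt := S.AmalgLT
  le_refl := AmalgLT.irrefl
  le_trans _ v _ huv hvw hwu := (hwu.cotrans v).elim hvw huv
  lt_iff_le_not_ge _ _ := ⟨fun h => ⟨h.asymm, not_not_intro h⟩, fun h => not_not.mp h.2⟩

instance : Std.Total (α := S.PreAmalgam) (· ≤ ·) :=
  ⟨fun _ _ => not_and_or.mp fun h => AmalgLT.asymm h.1 h.2⟩

variable (S) in
def toPreAmalgam : S.U → S.PreAmalgam := id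

variable (S) in
open Classical in
noncomputable def amalgam : LinOrderAnti where
  carrier := Antisymmetrization S.PreAmalgam (· ≤ ·)
  g := Quotient.map (fun u : S.PreAmalgam => S.toPreAmalgam (S.G u)) fun _ _ h =>
    ⟨fun h' => h.2 h'.of_G, fun h' => h.1 h'.of_G⟩
  anti := by
    rintro ⟨u⟩ ⟨v⟩ h
    exact fun h' => h h'.of_G

variable (S) in
noncomputable def toAmalgam (u : S.U) : S.amalgam.carrier :=
  toAntisymmetrization (· ≤ ·) (S.toPreAmalgam u)

theorem toAmalgam_le_toAmalgam_iff : S.toAmalgam u ≤ S.toAmalgam v ↔ ¬ S.AmalgLT v u :=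
  toAntisymmetrization_le_toAntisymmetrization_iff

theorem EqViaC.not_amalgLT (h : S.EqViaC u v) : ¬ S.AmalgLT u v := by
  rintro (hlt | ⟨-, hf | ht⟩)
  · obtain ⟨c, hu, hv⟩ := h
    rw [cAt_congr (isLeft_eq_of_le hlt.le), ← hv] at hu
    exact hlt.ne hu
  · exact hf.not_directLE (.inl h.symm.leViaC)
  · exact ht.2.2.1 h

theorem EqViaC.toAmalgam_eq (h : S.EqViaC u v) : S.toAmalgam u = S.toAmalgam v :=
  Quotient.sound ⟨h.symm.not_amalgLT, h.not_amalgLT⟩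

variable (S) in
noncomputable def jA : S.A.carrier ↪o S.amalgam.carrier :=
  OrderEmbedding.ofMapLEIff (S.toAmalgam ∘ Sum.inl) fun a a' => by
    simp [toAmalgam_le_toAmalgam_iff, AmalgLT, CrossLT]

variable (S) in
noncomputable def jB : S.B.carrier ↪o S.amalgam.carrier :=
  OrderEmbedding.ofMapLEIff (S.toAmalgam ∘ Sum.inr) fun b b' => by
    simp [toAmalgam_le_toAmalgam_iff, AmalgLT, CrossLT]

theorem jA_g (a : S.A.carrier) : S.jA (S.A.g a) = S.amalgam.g (S.jA a) := rfl

theorem jB_g (b : S.B.carrier) : S.jB (S.B.g b) = S.amalgam.g (S.jB b) := rfl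

theorem jA_iA_eq_jB_iB (c : S.C.carrier) : S.jA (S.iA c) = S.jB (S.iB c) :=
  EqViaC.toAmalgam_eq ⟨c, rfl, rfl⟩

end Span

end LinOrderAnti

/-- The class of linearly ordered sets with one order reversing unary operation
has the amalgamation property. -/
theorem linear_orders_one_antitone_op_amalgamation
    (A B C : LinOrderAnti)
    (iA : C.carrier ↪o A.carrier) (iB : C.carrier ↪o B.carrier)
    (hA : ∀ c, iA (C.g c) = A.g (iA c))
    (hB : ∀ c, iB (C.g c) = B.g (iB c)) :
    ∃ (D : LinOrderAnti) (jA : A.carrier ↪o D.carrier)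
      (jB : B.carrier ↪o D.carrier),
      (∀ a, jA (A.g a) = D.g (jA a)) ∧
      (∀ b, jB (B.g b) = D.g (jB b)) ∧
      (∀ c, jA (iA c) = jB (iB c)) := by
  let S : LinOrderAnti.Span := ⟨A, B, C, iA, iB, hA, hB⟩
  exact ⟨S.amalgam, S.jA, S.jB, S.jA_g, S.jB_g, S.jA_iA_eq_jB_iB⟩
end

section
/- The class of linearly ordered sets with one order reversing unary operation does not have the strong amalgamation property, even when the base structure is nonempty: there exist a two-element linearly ordered set C and three-element linearly ordered sets A, B, each with a strictly antitone unary operation g, and order embeddings i_A : C → A, i_B : C → B commuting with g, such that for every linearly ordered set D with a (not necessarily strict) antitone unary operation g_D and all order embeddings j_A : A → D, j_B : B → D commuting with the operations and satisfying j_A ∘ i_A = j_B ∘ i_B, the intersection of the ranges of j_A and j_B is strictly larger than the range of j_A ∘ i_A. -/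
/-- A linearly ordered set equipped with one strict order reversing (strictly
antitone) unary operation. -/
structure LinOrderStrictAnti where
  carrier : Type
  [linOrd : LinearOrder carrier]
  g : carrier → carrier
  santi : StrictAnti g

attribute [instance] LinOrderStrictAnti.linOrd

def Cex : LinOrderStrictAnti :=
  { carrier := Fin 2, g := fun x => 1 - x, santi := by decide }

def Aex : LinOrderStrictAnti :=
  { carrier := Fin 3, g := fun x => 2 - x, santi := by decide }

def iAex : (Fin 2) ↪o (Fin 3) :=
  OrderEmbedding.ofStrictMono (fun x => if x = 0 then 0 else 2) (by decide)

/-- The class of linearly ordered sets with one order reversing unary operation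
fails the strong amalgamation property even over a nonempty base: there are a
two-element base `C` and three-element extensions `A`, `B`, all with strictly
antitone operations, such that in every amalgam (with a not necessarily strict
antitone operation) the intersection of the ranges of the embeddings is strictly
larger than the range of the common composition. -/
theorem linear_orders_antitone_op_not_strong_amalgamation :
    ∃ (C A B : LinOrderStrictAnti),
      Nat.card C.carrier = 2 ∧ Nat.card A.carrier = 3 ∧ Nat.card B.carrier = 3 ∧
      ∃ (iA : C.carrier ↪o A.carrier) (iB : C.carrier ↪o B.carrier),
        (∀ c, iA (C.g c) = A.g (iA c)) ∧
        (∀ c, iB (C.g c) = B.g (iB c)) ∧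
        ∀ (D : LinOrderAnti) (jA : A.carrier ↪o D.carrier)
          (jB : B.carrier ↪o D.carrier),
          (∀ a, jA (A.g a) = D.g (jA a)) →
          (∀ b, jB (B.g b) = D.g (jB b)) →
          (∀ c, jA (iA c) = jB (iB c)) →
          Set.range (fun c => jA (iA c)) ⊂ Set.range jA ∩ Set.range jB := by
  refine ⟨Cex, Aex, Aex, by simp [Cex], by simp [Aex], by simp [Aex],
    iAex, iAex, (by show ∀ c : Fin 2, _; decide), (by show ∀ c : Fin 2, _; decide), ?_⟩
  intro D jA jB hA hB hcomm
  -- the middle points coincide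
  have hfixA : D.g (jA (1 : Fin 3)) = jA (1 : Fin 3) := by
    have := hA (1 : Fin 3); simpa [Aex] using this.symm
  have hfixB : D.g (jB (1 : Fin 3)) = jB (1 : Fin 3) := by
    have := hB (1 : Fin 3); simpa [Aex] using this.symm
  have hmid : jA (1 : Fin 3) = jB (1 : Fin 3) := by
    rcases lt_trichotomy (jA (1 : Fin 3)) (jB (1 : Fin 3)) with h | h | h
    · have := D.anti h.le
      rw [hfixA, hfixB] at this
      exact absurd this (not_le.mpr h)
    · exact h
    · have := D.anti h.le
      rw [hfixA, hfixB] at this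
      exact absurd this (not_le.mpr h)
  constructor
  · rintro x ⟨c, rfl⟩
    exact ⟨⟨iAex c, rfl⟩, ⟨iAex c, (hcomm c).symm⟩⟩
  · intro hsub
    obtain ⟨c, hc⟩ := hsub ⟨⟨(1 : Fin 3), rfl⟩, ⟨(1 : Fin 3), hmid.symm⟩⟩
    have h1 : iAex c = (1 : Fin 3) := jA.injective hc
    exact (by decide : ∀ c : Fin 2, iAex c ≠ (1 : Fin 3)) c h1
end

section
/- The class of linearly ordered sets with two order reversing unary operations does not have the amalgamation property: there exist finite linearly ordered sets A, B, C (with |C| = 1 and |A| = |B| = 3), each equipped with two antitone unary operations g and k, and order embeddings i_A : C → A, i_B : C → B commuting with both operations, such that there is no linearly ordered set D with two antitone unary operations admitting order embeddings j_A : A → D, j_B : B → D commuting with both operations and satisfying j_A ∘ i_A = j_B ∘ i_B. -/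
/-- A linearly ordered set equipped with two order reversing (antitone) unary
operations. -/
structure LinOrderTwoAnti where
  carrier : Type
  [linOrd : LinearOrder carrier]
  g : carrier → carrier
  k : carrier → carrier
  antiG : Antitone g
  antiK : Antitone k

attribute [instance] LinOrderTwoAnti.linOrd

abbrev myA : LinOrderTwoAnti where
  carrier := Fin 3
  g := ![2, 1, 0]
  k := fun _ => 1
  antiG := by decide
  antiK := by decide

abbrev myB : LinOrderTwoAnti where
  carrier := Fin 3
  g := fun _ => 1
  k := ![2, 1, 0]
  antiG := by decide
  antiK := by decide

abbrev myC : LinOrderTwoAnti where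
  carrier := Fin 1
  g := id
  k := id
  antiG := by decide
  antiK := by decide

abbrev myEmb : Fin 1 ↪o Fin 3 :=
  OrderEmbedding.ofStrictMono (fun _ => 1) (fun a b h => absurd h (by omega))

/-- The class of linearly ordered sets with two order reversing unary operations
does not have the amalgamation property, witnessed by finite structures with
`|C| = 1` and `|A| = |B| = 3`. -/
theorem linear_orders_two_antitone_ops_not_amalgamation :
    ∃ (A B C : LinOrderTwoAnti),
      Nat.card C.carrier = 1 ∧ Nat.card A.carrier = 3 ∧ Nat.card B.carrier = 3 ∧
      ∃ (iA : C.carrier ↪o A.carrier) (iB : C.carrier ↪o B.carrier),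
        (∀ c, iA (C.g c) = A.g (iA c)) ∧ (∀ c, iA (C.k c) = A.k (iA c)) ∧
        (∀ c, iB (C.g c) = B.g (iB c)) ∧ (∀ c, iB (C.k c) = B.k (iB c)) ∧
        ¬ ∃ (D : LinOrderTwoAnti) (jA : A.carrier ↪o D.carrier)
            (jB : B.carrier ↪o D.carrier),
            (∀ a, jA (A.g a) = D.g (jA a)) ∧ (∀ a, jA (A.k a) = D.k (jA a)) ∧
            (∀ b, jB (B.g b) = D.g (jB b)) ∧ (∀ b, jB (B.k b) = D.k (jB b)) ∧
            (∀ c, jA (iA c) = jB (iB c)) := by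
  refine ⟨myA, myB, myC, by simp [myC], by simp [myA], by simp [myB],
    myEmb, myEmb, ?_, ?_, ?_, ?_, ?_⟩
  · decide
  · decide
  · decide
  · decide
  rintro ⟨D, jA, jB, hAg, hAk, hBg, hBk, hcomm⟩
  have hc : jA 1 = jB 1 := by
    have := hcomm 0
    simpa [myEmb, myC, OrderEmbedding.ofStrictMono] using this
  rcases le_total (jA (0 : Fin 3)) (jB (0 : Fin 3)) with h | h
  · have hk := D.antiK h
    rw [← hAk 0, ← hBk 0] at hk
    have : jB (myB.k 0) ≤ jB 1 := by rw [← hc]; exact hk.trans_eq rfl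
    have h21 : (myB.k 0 : Fin 3) ≤ 1 := jB.le_iff_le.mp this
    revert h21; decide
  · have hg := D.antiG h
    rw [← hAg 0, ← hBg 0] at hg
    have : jA (myA.g 0) ≤ jA 1 := by rw [hc]; exact hg.trans_eq rfl
    have h21 : (myA.g 0 : Fin 3) ≤ 1 := jA.le_iff_le.mp this
    revert h21; decide
end
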